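/- arXiv:1210.7352 — 6 statements merged into one kernel-verified Lean document; each statement's English description precedes it below -/
import Mathlib

section
/- Let (Ω, λ) be a probability space and T : Ω → Ω a measure-preserving ergodic transformation. Let f : Ω → ℝ be a non-negative measurable function and define g : Ω → ℝ by g(ω) := f(Tω) − f(ω). If g ∈ L¹(Ω, λ), then for λ-almost every ω ∈ Ω one has lim_{n→∞} f(Tⁿω)/n = 0. -/
/-!
Write `Δh = h ∘ T - h` and `Sₙ` for Birkhoff sums. For a level `M`, the excess `(f - M)⁺`
telescopes along orbits: `(f - M)⁺ ∘ Tⁿ = (f - M)⁺ + Sₙ Δ(f - M)⁺ ≤ (f - M)⁺ + Sₙ φ_M` with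
`φ_M = (Δ(f - M)⁺)⁺`. As `0 ≤ φ_M ≤ |Δf|` and `φ_M → 0` pointwise, `∫ φ_M → 0`, so it suffices
to show that for a nonnegative integrable `φ` and `c > ∫ φ` one has `Sₙ φ ≤ c n + O(1)` a.e.

The set where `Sₙ φ - c n` is bounded above is `T`-invariant, hence null or conull. If it were
null, a.e. orbit has some `Sₙ φ > c n`. Adding `c` on the set `B_N` of points where none of the
first `N` sums does, every orbit segment splits greedily into blocks of length `≤ N` and average
`≥ c`, which after integration gives `c ≤ ∫ φ + c λ(B_N)`; letting `N → ∞`, `c ≤ ∫ φ`.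
-/

open MeasureTheory Filter Topology Set

section

variable {α : Type*}

theorem birkhoffSum_comp_sub {G : Type*} [AddCommGroup G] (T : α → α) (h : α → G) (n : ℕ)
    (x : α) : birkhoffSum T (fun y => h (T y) - h y) n x = h (T^[n] x) - h x := by
  induction n with
  | zero => simp
  | succ n ih => rw [birkhoffSum_succ, ih, Function.iterate_succ_apply']; abel

theorem birkhoffSum_nonneg {T : α → α} {ψ : α → ℝ} (hψ : 0 ≤ ψ) (n : ℕ) (x : α) :
    0 ≤ birkhoffSum T ψ n x :=
  Finset.sum_nonneg fun _ _ => hψ _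

theorem birkhoffSum_mono {T : α → α} {φ ψ : α → ℝ} (h : φ ≤ ψ) (n : ℕ) (x : α) :
    birkhoffSum T φ n x ≤ birkhoffSum T ψ n x :=
  Finset.sum_le_sum fun _ _ => h _

theorem bddAbove_birkhoffSum_sub_mul_apply_iff (T : α → α) (φ : α → ℝ) (c : ℝ) (x : α) :
    BddAbove (range fun n : ℕ => birkhoffSum T φ n (T x) - c * n) ↔
      BddAbove (range fun n : ℕ => birkhoffSum T φ n x - c * n) := by
  have shift : ∀ n : ℕ, birkhoffSum T φ n (T x) - c * n =
      birkhoffSum T φ (n + 1) x - c * (n + 1 : ℕ) + (c - φ x) := by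
    intro n
    rw [birkhoffSum_succ']
    push_cast
    ring
  simp only [bddAbove_def, forall_mem_range, shift]
  constructor
  · rintro ⟨r, hr⟩
    refine ⟨max 0 (r - (c - φ x)), fun n => ?_⟩
    cases n with
    | zero => simp
    | succ n => exact le_max_of_le_right (by linarith [hr n])
  · rintro ⟨r, hr⟩
    exact ⟨r + (c - φ x), fun n => by linarith [hr (n + 1)]⟩

theorem mul_sub_le_birkhoffSum {T : α → α} {ψ : α → ℝ} {c : ℝ} {N : ℕ} (hc : 0 ≤ c)
    (hψ : 0 ≤ ψ) (hcover : ∀ x, ∃ n ∈ Finset.Icc 1 N, c * n ≤ birkhoffSum T ψ n x)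
    (L : ℕ) (x : α) : c * (L - N) ≤ birkhoffSum T ψ L x := by
  induction L using Nat.strong_induction_on generalizing x with
  | _ L ih =>
  obtain ⟨n, hn, hcn⟩ := hcover x
  obtain ⟨hn1, hnN⟩ := Finset.mem_Icc.mp hn
  rcases le_or_gt L n with hLn | hnL
  · have hLN : (L : ℝ) ≤ N := by exact_mod_cast hLn.trans hnN
    nlinarith [birkhoffSum_nonneg (T := T) hψ L x]
  · obtain ⟨k, rfl⟩ := Nat.exists_eq_add_of_le hnL.le
    have hk := ih k (by omega) (T^[n] x)
    rw [birkhoffSum_add]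
    push_cast at hk ⊢
    linarith

theorem measurable_birkhoffSum [MeasurableSpace α] {T : α → α} {φ : α → ℝ}
    (hT : Measurable T) (hφ : Measurable φ) (n : ℕ) : Measurable (birkhoffSum T φ n) :=
  Finset.measurable_sum _ fun k _ => hφ.comp (hT.iterate k)

theorem measurableSet_forall_birkhoffSum_le [MeasurableSpace α] {T : α → α} {φ : α → ℝ}
    (hT : Measurable T) (hφ : Measurable φ) (c : ℝ) (N : ℕ) :
    MeasurableSet {x | ∀ n ∈ Finset.Icc 1 N, birkhoffSum T φ n x ≤ c * n} := by
  simp only [ofPred_forall]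
  exact .biInter (Finset.countable_toSet _) fun n _ =>
    measurableSet_le (measurable_birkhoffSum hT hφ n) measurable_const

namespace MeasureTheory.MeasurePreserving

variable [MeasurableSpace α] {μ : Measure α} {T : α → α}

theorem integrable_birkhoffSum {E : Type*} [NormedAddCommGroup E] (hT : MeasurePreserving T μ μ)
    {φ : α → E} (hφ : Integrable φ μ) (n : ℕ) : Integrable (birkhoffSum T φ n) μ :=
  integrable_finsetSum _ fun k _ => (hT.iterate k).integrable_comp_of_integrable hφ

theorem integral_birkhoffSum {E : Type*} [NormedAddCommGroup E] [NormedSpace ℝ E]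
    (hT : MeasurePreserving T μ μ) {φ : α → E} (hφ : Integrable φ μ) (n : ℕ) :
    ∫ x, birkhoffSum T φ n x ∂μ = n • ∫ x, φ x ∂μ := by
  have hcomp : ∀ k, ∫ x, φ (T^[k] x) ∂μ = ∫ x, φ x ∂μ := fun k => by
    rw [← integral_map (hT.iterate k).aemeasurable
      (((hT.iterate k).map_eq).symm ▸ hφ.aestronglyMeasurable), (hT.iterate k).map_eq]
  simp only [birkhoffSum]
  rw [integral_finsetSum (f := fun k x => φ (T^[k] x)) _
    fun k _ => (hT.iterate k).integrable_comp_of_integrable hφ]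
  simp [hcomp]

theorem mul_measureReal_univ_le_integral_of_cover [IsFiniteMeasure μ]
    (hT : MeasurePreserving T μ μ) {ψ : α → ℝ} {c : ℝ} {N : ℕ} (hc : 0 ≤ c) (hψ0 : 0 ≤ ψ)
    (hψ : Integrable ψ μ) (hcover : ∀ x, ∃ n ∈ Finset.Icc 1 N, c * n ≤ birkhoffSum T ψ n x) :
    c * μ.real univ ≤ ∫ x, ψ x ∂μ := by
  have hL : ∀ L : ℕ, (L : ℝ) * (c * μ.real univ - ∫ x, ψ x ∂μ) ≤ c * N * μ.real univ := by
    intro L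
    have := integral_mono (integrable_const _) (hT.integrable_birkhoffSum hψ L)
      (mul_sub_le_birkhoffSum hc hψ0 hcover L)
    rw [integral_const, hT.integral_birkhoffSum hψ, smul_eq_mul, nsmul_eq_mul] at this
    linarith
  by_contra! hlt
  obtain ⟨L, hNL⟩ := exists_nat_gt (c * N * μ.real univ / (c * μ.real univ - ∫ x, ψ x ∂μ))
  rw [div_lt_iff₀ (sub_pos.mpr hlt)] at hNL
  linarith [hL L]

theorem mul_measureReal_univ_le_integral_add [IsFiniteMeasure μ] (hT : MeasurePreserving T μ μ)
    {φ : α → ℝ} {c : ℝ} {N : ℕ} (hφm : Measurable φ) (hφ0 : 0 ≤ φ) (hφ : Integrable φ μ)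
    (hc : 0 ≤ c) (hN : 1 ≤ N) :
    c * μ.real univ ≤
      ∫ x, φ x ∂μ + c * μ.real {x | ∀ n ∈ Finset.Icc 1 N, birkhoffSum T φ n x ≤ c * n} := by
  set B := {x | ∀ n ∈ Finset.Icc 1 N, birkhoffSum T φ n x ≤ c * n}
  have hBm : MeasurableSet B := measurableSet_forall_birkhoffSum_le hT.measurable hφm c N
  set ψ : α → ℝ := fun x => φ x + B.indicator (fun _ => c) x
  have hψφ : φ ≤ ψ := fun x => le_add_of_nonneg_right (indicator_nonneg (fun _ _ => hc) _)
  have hψ : ∫ x, ψ x ∂μ = ∫ x, φ x ∂μ + c * μ.real B := by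
    rw [integral_add hφ ((integrable_const c).indicator hBm), integral_indicator_const c hBm,
      smul_eq_mul, mul_comm]
  rw [← hψ]
  refine hT.mul_measureReal_univ_le_integral_of_cover (N := N) hc (hφ0.trans hψφ)
    (hφ.add ((integrable_const c).indicator hBm)) fun x => ?_
  by_cases hx : x ∈ B
  · refine ⟨1, Finset.mem_Icc.mpr ⟨le_rfl, hN⟩, ?_⟩
    simpa [ψ, birkhoffSum_one, indicator_of_mem hx] using hφ0 x
  · simp only [B, mem_ofPred_eq, not_forall, not_le] at hx
    obtain ⟨n, hn, hlt⟩ := hx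
    exact ⟨n, hn, hlt.le.trans (birkhoffSum_mono hψφ n x)⟩

theorem mul_measureReal_univ_le_integral [IsFiniteMeasure μ] (hT : MeasurePreserving T μ μ)
    {φ : α → ℝ} {c : ℝ} (hφm : Measurable φ) (hφ0 : 0 ≤ φ) (hφ : Integrable φ μ)
    (h : ∀ᵐ x ∂μ, ∃ n, 0 < n ∧ c * n < birkhoffSum T φ n x) :
    c * μ.real univ ≤ ∫ x, φ x ∂μ := by
  rcases lt_or_ge c 0 with hc | hc
  · nlinarith [integral_nonneg (μ := μ) hφ0, measureReal_nonneg (μ := μ) (s := univ)]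
  set B : ℕ → Set α := fun N => {x | ∀ n ∈ Finset.Icc 1 N, birkhoffSum T φ n x ≤ c * n}
  have hBm : ∀ N, MeasurableSet (B N) := measurableSet_forall_birkhoffSum_le hT.measurable hφm c
  have hBnull : μ (⋂ N, B N) = 0 := by
    refine measure_mono_null (fun x hx => ?_) (ae_iff.mp h)
    rintro ⟨n, hn, hlt⟩
    exact (mem_iInter.mp hx n n (Finset.mem_Icc.mpr ⟨hn, le_rfl⟩)).not_gt hlt
  have hBlim : Tendsto (fun N => μ.real (B N)) atTop (𝓝 0) := by
    have := tendsto_measure_iInter_atTop (fun N => (hBm N).nullMeasurableSet)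
      (fun N M hNM x hx n hn => hx n (Finset.Icc_subset_Icc_right hNM hn))
      ⟨0, measure_ne_top μ _⟩
    rw [hBnull] at this
    exact (ENNReal.tendsto_toReal ENNReal.zero_ne_top).comp this
  refine ge_of_tendsto ?_ (eventually_atTop.mpr
    ⟨1, fun N hN => hT.mul_measureReal_univ_le_integral_add hφm hφ0 hφ hc hN⟩)
  simpa only [mul_zero, add_zero] using
    (tendsto_const_nhds (x := ∫ x, φ x ∂μ)).add (hBlim.const_mul c)

end MeasureTheory.MeasurePreserving

theorem Ergodic.ae_bddAbove_birkhoffSum_sub_mul [MeasurableSpace α] {μ : Measure α}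
    [IsProbabilityMeasure μ] {T : α → α} (hT : Ergodic T μ) {φ : α → ℝ} {c : ℝ}
    (hφm : Measurable φ) (hφ0 : 0 ≤ φ) (hφ : Integrable φ μ) (hc : ∫ x, φ x ∂μ < c) :
    ∀ᵐ x ∂μ, BddAbove (range fun n : ℕ => birkhoffSum T φ n x - c * n) := by
  set G := {x | BddAbove (range fun n : ℕ => birkhoffSum T φ n x - c * n)}
  have hGm : MeasurableSet G := measurableSet_bddAbove_range fun n =>
    (measurable_birkhoffSum hT.measurable hφm n).sub_const _
  have hGinv : T ⁻¹' G = G := ext fun x => bddAbove_birkhoffSum_sub_mul_apply_iff T φ c x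
  rcases hT.ae_empty_or_univ hGm hGinv with hG | hG
  · have hexceed : ∀ᵐ x ∂μ, ∃ n, 0 < n ∧ c * n < birkhoffSum T φ n x := by
      filter_upwards [ae_eq_empty.mp hG |> measure_eq_zero_iff_ae_notMem.mp] with x hx
      obtain ⟨_, ⟨n, rfl⟩, hlt⟩ := not_bddAbove_iff.mp hx 0
      refine ⟨n, Nat.pos_of_ne_zero fun hn => ?_, by linarith⟩
      simp [hn] at hlt
    have := hT.toMeasurePreserving.mul_measureReal_univ_le_integral hφm hφ0 hφ hexceed
    rw [probReal_univ, mul_one] at this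
    exact absurd hc this.not_gt
  · exact ae_eq_univ.mp hG |> measure_eq_zero_iff_ae_notMem.mp |>.mono fun x hx => not_not.mp hx

/-- `φ_M = (Δ(f - M)⁺)⁺`, where `Δh = h ∘ T - h`. -/
def excessIncrement (T : α → α) (f : α → ℝ) (M : ℝ) (x : α) : ℝ :=
  max (max (f (T x) - M) 0 - max (f x - M) 0) 0

theorem excessIncrement_nonneg (T : α → α) (f : α → ℝ) (M : ℝ) : 0 ≤ excessIncrement T f M :=
  fun _ => le_max_right _ _

theorem norm_excessIncrement_le (T : α → α) (f : α → ℝ) (M : ℝ) (x : α) :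
    ‖excessIncrement T f M x‖ ≤ |f (T x) - f x| := by
  rw [Real.norm_of_nonneg (excessIncrement_nonneg T f M x)]
  exact max_le ((le_abs_self _).trans <| (abs_max_sub_max_le_abs _ _ _).trans_eq <| by
    rw [sub_sub_sub_cancel_right]) (abs_nonneg _)

theorem measurable_excessIncrement [MeasurableSpace α] {T : α → α} {f : α → ℝ}
    (hT : Measurable T) (hf : Measurable f) (M : ℝ) : Measurable (excessIncrement T f M) := by
  unfold excessIncrement
  fun_prop

theorem integrable_excessIncrement [MeasurableSpace α] {μ : Measure α} {T : α → α}
    {f : α → ℝ} (hT : Measurable T) (hf : Measurable f)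
    (hg : Integrable (fun x => f (T x) - f x) μ) (M : ℝ) : Integrable (excessIncrement T f M) μ :=
  hg.abs.mono' (measurable_excessIncrement hT hf M).aestronglyMeasurable
    (.of_forall (norm_excessIncrement_le T f M))

theorem apply_iterate_le_add_birkhoffSum_excessIncrement (T : α → α) (f : α → ℝ) (M : ℝ)
    (n : ℕ) (x : α) :
    f (T^[n] x) ≤ M + max (f x - M) 0 + birkhoffSum T (excessIncrement T f M) n x := by
  have htel := birkhoffSum_comp_sub T (fun y => max (f y - M) 0) n x
  have hle : birkhoffSum T (fun y => max (f (T y) - M) 0 - max (f y - M) 0) n x ≤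
      birkhoffSum T (excessIncrement T f M) n x :=
    birkhoffSum_mono (fun y => le_max_left _ _) n x
  linarith [le_max_left (f (T^[n] x) - M) 0]

theorem tendsto_integral_excessIncrement [MeasurableSpace α] {μ : Measure α} {T : α → α}
    {f : α → ℝ} (hT : Measurable T) (hf : Measurable f)
    (hg : Integrable (fun x => f (T x) - f x) μ) :
    Tendsto (fun M => ∫ x, excessIncrement T f M x ∂μ) atTop (𝓝 0) := by
  have hlim : ∀ x, Tendsto (fun M => excessIncrement T f M x) atTop (𝓝 0) := fun x => by
    refine tendsto_const_nhds.congr' ?_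
    filter_upwards [eventually_ge_atTop (max (f x) (f (T x)))] with M hM
    simp [excessIncrement, (le_max_left _ _).trans hM, (le_max_right _ _).trans hM]
  simpa using tendsto_integral_filter_of_dominated_convergence _
    (.of_forall fun M => (measurable_excessIncrement hT hf M).aestronglyMeasurable)
    (.of_forall fun M => .of_forall (norm_excessIncrement_le T f M)) hg.abs (.of_forall hlim)

theorem Ergodic.ae_eventually_apply_iterate_le_mul [MeasurableSpace α] {μ : Measure α}
    [IsProbabilityMeasure μ] {T : α → α} (hT : Ergodic T μ) {f : α → ℝ} (hf : Measurable f)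
    (hg : Integrable (fun x => f (T x) - f x) μ) {ε : ℝ} (hε : 0 < ε) :
    ∀ᵐ x ∂μ, ∀ᶠ n : ℕ in atTop, f (T^[n] x) ≤ ε * n := by
  have hTm := hT.toMeasurePreserving.measurable
  obtain ⟨M, hM⟩ := ((tendsto_integral_excessIncrement hTm hf hg).eventually_lt_const
    (half_pos hε)).exists
  filter_upwards [hT.ae_bddAbove_birkhoffSum_sub_mul (measurable_excessIncrement hTm hf M)
    (excessIncrement_nonneg T f M) (integrable_excessIncrement hTm hf hg M) hM] with x ⟨r, hr⟩
  have hlin : ∀ᶠ n : ℕ in atTop, M + max (f x - M) 0 + r ≤ ε / 2 * n :=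
    (tendsto_natCast_atTop_atTop.const_mul_atTop (half_pos hε)).eventually_ge_atTop _
  filter_upwards [hlin] with n hn
  linarith [hr (mem_range_self n), apply_iterate_le_add_birkhoffSum_excessIncrement T f M n x]

theorem tendsto_div_natCast_zero_of_eventually_le {u : ℕ → ℝ} (hu : 0 ≤ u)
    (h : ∀ ε > 0, ∀ᶠ n in atTop, u n ≤ ε * n) : Tendsto (fun n => u n / n) atTop (𝓝 0) := by
  refine tendsto_order.2 ⟨fun a ha => .of_forall fun n =>
    ha.trans_le (div_nonneg (hu n) n.cast_nonneg), fun ε hε => ?_⟩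
  filter_upwards [h (ε / 2) (half_pos hε), eventually_gt_atTop 0] with n hn hpos
  have hpos' : (0 : ℝ) < n := Nat.cast_pos.mpr hpos
  rw [div_lt_iff₀ hpos']
  linarith [mul_lt_mul_of_pos_right (half_lt_self hε) hpos']

end

/-- **Sublinear growth along orbits of ergodic transformations.**
Let `(Ω, λ)` be a probability space and `T : Ω → Ω` a measure-preserving ergodic
transformation.  Let `f : Ω → ℝ` be a non-negative measurable function and define
`g(ω) := f(Tω) − f(ω)`.  If `g ∈ L¹(Ω, λ)`, then for `λ`-almost every `ω` one has
`lim_{n→∞} f(Tⁿ ω)/n = 0`. -/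
theorem stmt_0 {Ω : Type*} [MeasurableSpace Ω] (lam : Measure Ω) [IsProbabilityMeasure lam]
    (T : Ω → Ω) (hT : Ergodic T lam)
    (f : Ω → ℝ) (hf_meas : Measurable f) (hf_nonneg : ∀ ω, 0 ≤ f ω)
    (hg : Integrable (fun ω => f (T ω) - f ω) lam) :
    ∀ᵐ ω ∂lam, Tendsto (fun n : ℕ => f (T^[n] ω) / n) atTop (𝓝 0) := by
  have hbound := ae_all_iff.2 fun j : ℕ =>
    hT.ae_eventually_apply_iterate_le_mul hf_meas hg (Nat.one_div_pos_of_nat (n := j))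
  filter_upwards [hbound] with ω hω
  refine tendsto_div_natCast_zero_of_eventually_le (fun n => hf_nonneg _) fun ε hε => ?_
  obtain ⟨j, hj⟩ := exists_nat_one_div_lt hε
  filter_upwards [hω j] with n hn
  exact hn.trans (by gcongr)
end

section
/- Let X be a proper, geodesic metric space with a stably visible compactification X̄. Then for every pair of distinct boundary points ξ, η ∈ ∂X, the pencil P(ξ, η) is non-empty, i.e. there exists a geodesic line γ : ℝ → X with lim_{t→∞} γ(t) = ξ and lim_{t→−∞} γ(t) = η. -/
open Filter Topology

/-- `f` is a geodesic segment from `u` to `v`, parametrized by arclength on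
`[0, d(u,v)]`. -/
def IsGeodesicFrom {X : Type*} [MetricSpace X] (f : ℝ → X) (u v : X) : Prop :=
  f 0 = u ∧ f (dist u v) = v ∧
    ∀ s ∈ Set.Icc (0 : ℝ) (dist u v), ∀ t ∈ Set.Icc (0 : ℝ) (dist u v),
      dist (f s) (f t) = |s - t|

/-- A metric space is geodesic if any two points are joined by a geodesic segment. -/
def GeodesicSpace (X : Type*) [MetricSpace X] : Prop :=
  ∀ u v : X, ∃ f : ℝ → X, IsGeodesicFrom f u v

/-- A compactification `ι : X → Y` is *stably visible* if every sequence of geodesic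
segments whose endpoints converge to two distinct boundary points intersects some
bounded subset of `X`. -/
def StablyVisible {X Y : Type*} [MetricSpace X] [TopologicalSpace Y] (ι : X → Y) : Prop :=
  ∀ ξ η : Y, ξ ∉ Set.range ι → η ∉ Set.range ι → ξ ≠ η →
    ∀ (a b : ℕ → X) (f : ℕ → ℝ → X),
      (∀ n, IsGeodesicFrom (f n) (a n) (b n)) →
      Tendsto (fun n => ι (a n)) atTop (𝓝 η) →
      Tendsto (fun n => ι (b n)) atTop (𝓝 ξ) →
      ∃ B : Set X, Bornology.IsBounded B ∧
        ∀ n, ∃ t ∈ Set.Icc (0 : ℝ) (dist (a n) (b n)), f n t ∈ B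

/-!
Approximate `η` and `ξ` by points `a n`, `b n` of `X` and join them by geodesic segments. Stable
visibility makes all segments pass through a fixed bounded set, at parameters `t n`; since the
endpoints leave every compact set, both `t n` and the remaining lengths tend to infinity.
Recentring the segments at `t n` and taking pointwise limits along an ultrafilter (possible since
`X` is proper) yields a geodesic line `γ`. Its ends converge to `ξ` and `η`: any other limit
point `ζ` at `+∞` is again a boundary point, and the tails of the segments starting near `ζ` would
then violate stable visibility for the pair `ζ`, `ξ`; the end at `-∞` is handled by reversing the
segments.
-/

open Set Bornology Metric

namespace IsGeodesicFrom

variable {X : Type*} [MetricSpace X] {f : ℝ → X} {u v : X}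

theorem dist_eq (hf : IsGeodesicFrom f u v) {s t : ℝ} (hs : s ∈ Icc 0 (dist u v))
    (ht : t ∈ Icc 0 (dist u v)) : dist (f s) (f t) = |s - t| :=
  hf.2.2 s hs t ht

theorem dist_left (hf : IsGeodesicFrom f u v) {s : ℝ} (hs : s ∈ Icc 0 (dist u v)) :
    dist u (f s) = s := by
  have := hf.dist_eq ⟨le_rfl, dist_nonneg⟩ hs
  rwa [hf.1, zero_sub, abs_neg, abs_of_nonneg hs.1] at this

theorem dist_right (hf : IsGeodesicFrom f u v) {s : ℝ} (hs : s ∈ Icc 0 (dist u v)) :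
    dist (f s) v = dist u v - s := by
  have := hf.dist_eq hs ⟨dist_nonneg, le_rfl⟩
  rwa [hf.2.1, abs_sub_comm, abs_of_nonneg (sub_nonneg.2 hs.2)] at this

theorem reverse (hf : IsGeodesicFrom f u v) : IsGeodesicFrom (fun s => f (dist u v - s)) v u := by
  refine ⟨by simpa using hf.2.1, by simpa [dist_comm] using hf.1, fun s hs t ht => ?_⟩
  rw [dist_comm v u] at hs ht
  rw [hf.dist_eq ⟨by linarith [hs.2], by linarith [hs.1]⟩ ⟨by linarith [ht.2], by linarith [ht.1]⟩,
    sub_sub_sub_cancel_left, abs_sub_comm]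

theorem comp_add_const (hf : IsGeodesicFrom f u v) {τ : ℝ} (hτ : τ ∈ Icc 0 (dist u v)) :
    IsGeodesicFrom (fun s => f (s + τ)) (f τ) v := by
  refine ⟨by simp, by simp [hf.dist_right hτ, hf.2.1], fun s hs t ht => ?_⟩
  rw [hf.dist_right hτ] at hs ht
  rw [hf.dist_eq ⟨by linarith [hs.1, hτ.1], by linarith [hs.2]⟩
    ⟨by linarith [ht.1, hτ.1], by linarith [ht.2]⟩, add_sub_add_right_eq_sub]

end IsGeodesicFrom

section Escape

variable {α X Y : Type*} [MetricSpace X] [TopologicalSpace Y] {l : Filter α} {x : α → X}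

theorem tendsto_cobounded_iff_tendsto_dist_of_isBounded {y : α → X} (hy : IsBounded (range y)) :
    Tendsto x l (cobounded X) ↔ Tendsto (fun i => dist (x i) (y i)) l atTop := by
  rcases isEmpty_or_nonempty α with hα | ⟨⟨i₀⟩⟩
  · simp [filter_eq_bot_of_isEmpty l]
  obtain ⟨C, hC⟩ := hy.subset_closedBall (y i₀)
  have hyC : ∀ i, dist (y i) (y i₀) ≤ C := fun i => hC ⟨i, rfl⟩
  rw [← tendsto_dist_right_atTop_iff (y i₀)]
  constructor <;> intro h <;> refine tendsto_atTop_mono (fun i => ?_)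
    (tendsto_atTop_add_const_right _ (-C) h)
  · linarith [dist_triangle (x i) (y i) (y i₀), hyC i]
  · linarith [dist_triangle (x i) (y i₀) (y i), dist_comm (y i) (y i₀), hyC i]

theorem tendsto_cobounded_of_tendsto_notMem_range [ProperSpace X] [T2Space Y] {ι : X → Y}
    (hι : Continuous ι) {ζ : Y} (hζ : ζ ∉ range ι) (hx : Tendsto (ι ∘ x) l (𝓝 ζ)) :
    Tendsto x l (cobounded X) := by
  rw [cobounded_eq_cocompact, hasBasis_cocompact.tendsto_right_iff]
  intro K hK
  have hζK : (ι '' K)ᶜ ∈ 𝓝 ζ :=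
    (hK.image hι).isClosed.compl_mem_nhds fun ⟨z, _, hz⟩ => hζ ⟨z, hz⟩
  exact (hx.eventually_mem hζK).mono fun i hi hxi => hi (mem_image_of_mem ι hxi)

theorem notMem_range_of_tendsto_cobounded [l.NeBot] {ι : X → Y} (hι : IsInducing ι) {ζ : Y}
    (hx : Tendsto x l (cobounded X)) (hxζ : Tendsto (ι ∘ x) l (𝓝 ζ)) : ζ ∉ range ι := by
  rintro ⟨z, rfl⟩
  have := (disjoint_nhds_cobounded z).mono (hι.tendsto_nhds_iff.2 hxζ) hx
  exact (NeBot.map ‹_› x).ne (disjoint_self.1 this)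

end Escape

theorem DenseRange.exists_seq_tendsto {X Y : Type*} [TopologicalSpace Y]
    [FirstCountableTopology Y] {ι : X → Y} (h : DenseRange ι) (y : Y) :
    ∃ x : ℕ → X, Tendsto (ι ∘ x) atTop (𝓝 y) := by
  obtain ⟨y', hy', hlim⟩ := mem_closure_iff_seq_limit.1 (h y)
  choose x hx using hy'
  exact ⟨x, by simpa only [Function.comp_def, hx] using hlim⟩

theorem isometry_of_tendsto {α β X : Type*} [PseudoMetricSpace β] [PseudoMetricSpace X]
    {l : Filter α} [l.NeBot] {g : α → β → X} {γ : β → X}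
    (hγ : ∀ s, Tendsto (g · s) l (𝓝 (γ s))) (hg : ∀ s u, ∀ᶠ i in l, dist (g i s) (g i u) = dist s u) :
    Isometry γ :=
  Isometry.of_dist_eq fun s u => tendsto_nhds_unique ((hγ s).dist (hγ u))
    (tendsto_const_nhds.congr' ((hg s u).mono fun _ h => h.symm))

theorem exists_seq_tendsto_of_mapClusterPt {Y : Type*} [TopologicalSpace Y]
    [FirstCountableTopology Y] {𝒰 : Filter ℕ} [𝒰.NeBot] (h𝒰 : 𝒰 ≤ atTop) {h : ℕ → ℝ → Y}
    {H : ℝ → Y} (hH : ∀ s, Tendsto (h · s) 𝒰 (𝓝 (H s))) {ζ : Y} (hζ : MapClusterPt ζ atTop H)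
    {P : ℕ → ℝ → Prop} (hP : ∀ s, ∀ᶠ n in 𝒰, P n s) :
    ∃ (n : ℕ → ℕ) (s : ℕ → ℝ), (∀ k, k ≤ n k ∧ (k : ℝ) ≤ s k ∧ P (n k) (s k)) ∧
      Tendsto (fun k => h (n k) (s k)) atTop (𝓝 ζ) := by
  obtain ⟨V, hV⟩ := (𝓝 ζ).exists_antitone_basis
  have hchoice : ∀ k : ℕ, ∃ n s, (k ≤ n ∧ (k : ℝ) ≤ s ∧ P n s) ∧ h n s ∈ V k := by
    intro k
    obtain ⟨s, hks, hs⟩ := (mapClusterPt_iff_frequently.1 hζ _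
      (interior_mem_nhds.2 (hV.mem k))).forall_exists_of_atTop k
    obtain ⟨n, hkn, hPn, hn⟩ := (((eventually_ge_atTop k).filter_mono h𝒰).and
      ((hP s).and ((hH s).eventually (isOpen_interior.mem_nhds hs)))).exists
    exact ⟨n, s, ⟨hkn, hks, hPn⟩, interior_subset hn⟩
  choose n s hns hnsV using hchoice
  exact ⟨n, s, hns, hV.tendsto hnsV⟩

section LimitLine

variable {X Y : Type*} [MetricSpace X] {a b : ℕ → X} {f : ℕ → ℝ → X} {t : ℕ → ℝ}

theorem exists_isometry_tendsto_of_isGeodesicFrom [ProperSpace X] (𝒰 : Ultrafilter ℕ)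
    (h𝒰 : (𝒰 : Filter ℕ) ≤ atTop) (hf : ∀ n, IsGeodesicFrom (f n) (a n) (b n))
    (ht : ∀ n, t n ∈ Icc 0 (dist (a n) (b n)))
    (hbdd : IsBounded (range fun n => f n (t n))) (hl : Tendsto t atTop atTop)
    (hr : Tendsto (fun n => dist (a n) (b n) - t n) atTop atTop) :
    ∃ γ : ℝ → X, Isometry γ ∧ ∀ s, Tendsto (fun n => f n (t n + s)) 𝒰 (𝓝 (γ s)) := by
  have hmem : ∀ s, ∀ᶠ n in 𝒰, t n + s ∈ Icc 0 (dist (a n) (b n)) := fun s =>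
    ((hl.eventually_ge_atTop (-s)).and (hr.eventually_ge_atTop s)).filter_mono h𝒰 |>.mono
      fun n hn => ⟨by linarith [hn.1], by linarith [hn.2]⟩
  have hlim : ∀ s, ∃ p, Tendsto (fun n => f n (t n + s)) 𝒰 (𝓝 p) := by
    intro s
    have hK : IsCompact (cthickening |s| (range fun n => f n (t n))) :=
      isCompact_of_isClosed_isBounded isClosed_cthickening hbdd.cthickening
    obtain ⟨p, -, hp⟩ := hK.ultrafilter_le_nhds' (𝒰.map fun n => f n (t n + s)) <|
      Ultrafilter.mem_map.2 <| (hmem s).mono fun n hn =>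
        mem_cthickening_of_dist_le _ _ _ _ ⟨n, rfl⟩ <| by
          rw [(hf n).dist_eq hn (ht n), add_sub_cancel_left]
    exact ⟨p, hp⟩
  choose γ hγ using hlim
  refine ⟨γ, isometry_of_tendsto hγ fun s u => ?_, hγ⟩
  filter_upwards [hmem s, hmem u] with n hs hu
  rw [(hf n).dist_eq hs hu, Real.dist_eq, add_sub_add_left_eq_sub]

variable [TopologicalSpace Y] [FirstCountableTopology Y] [CompactSpace Y] {ι : X → Y}
  {𝒰 : Filter ℕ} [𝒰.NeBot] {γ : ℝ → X}

theorem tendsto_atTop_of_stablyVisible (hι : IsInducing ι) (hsv : StablyVisible ι) {ξ : Y}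
    (hξ : ξ ∉ range ι) (hf : ∀ n, IsGeodesicFrom (f n) (a n) (b n))
    (hb : Tendsto (ι ∘ b) atTop (𝓝 ξ)) (ht : ∀ n, t n ∈ Icc 0 (dist (a n) (b n)))
    (hbdd : IsBounded (range fun n => f n (t n)))
    (hr : Tendsto (fun n => dist (a n) (b n) - t n) atTop atTop) (h𝒰 : 𝒰 ≤ atTop)
    (hγ : ∀ s, Tendsto (fun n => f n (t n + s)) 𝒰 (𝓝 (γ s))) :
    Tendsto (ι ∘ γ) atTop (𝓝 ξ) := by
  refine tendsto_nhds_of_unique_mapClusterPt fun ζ hζ => ?_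
  by_contra hζξ
  obtain ⟨n, s, hns, hlim⟩ := exists_seq_tendsto_of_mapClusterPt h𝒰
    (fun s => (hι.continuous.tendsto _).comp (hγ s)) hζ
    (P := fun n s => s ≤ dist (a n) (b n) - t n) fun s => (hr.eventually_ge_atTop s).filter_mono h𝒰
  have hs0 : ∀ k, 0 ≤ s k := fun k => k.cast_nonneg.trans (hns k).2.1
  have hτ : ∀ k, t (n k) + s k ∈ Icc 0 (dist (a (n k)) (b (n k))) := fun k =>
    ⟨add_nonneg (ht _).1 (hs0 k), by linarith [(hns k).2.2]⟩
  have hbdd' : IsBounded (range fun k => f (n k) (t (n k))) :=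
    hbdd.subset (range_comp_subset_range n fun n => f n (t n))
  have hesc : Tendsto (fun k => f (n k) (t (n k) + s k)) atTop (cobounded X) := by
    refine (tendsto_cobounded_iff_tendsto_dist_of_isBounded hbdd').2 <|
      tendsto_atTop_mono (fun k => ?_) tendsto_natCast_atTop_atTop
    rw [(hf _).dist_eq (hτ k) (ht _), add_sub_cancel_left, abs_of_nonneg (hs0 k)]
    exact (hns k).2.1
  have hζ : ζ ∉ range ι := notMem_range_of_tendsto_cobounded hι hesc hlim
  obtain ⟨B, hB, hmeet⟩ := hsv ξ ζ hξ hζ (Ne.symm hζξ) _ (fun k => b (n k)) _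
    (fun k => (hf (n k)).comp_add_const (hτ k)) hlim
    (hb.comp (tendsto_atTop_mono (fun k => (hns k).1) tendsto_id))
  obtain ⟨C, hC⟩ := isBounded_iff.1 (hB.union hbdd')
  obtain ⟨k, hk⟩ := exists_nat_gt C
  obtain ⟨w, hw, hwB⟩ := hmeet k
  rw [(hf _).dist_right (hτ k)] at hw
  have hdist : dist (f (n k) (w + (t (n k) + s k))) (f (n k) (t (n k))) = w + s k := by
    rw [(hf _).dist_eq ⟨by linarith [hw.1, (hτ k).1], by linarith [hw.2]⟩ (ht _),
      abs_of_nonneg (by linarith [hw.1, hs0 k])]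
    ring
  linarith [hC (Or.inl hwB) (Or.inr ⟨k, rfl⟩), hw.1, (hns k).2.1]

theorem tendsto_atBot_of_stablyVisible (hι : IsInducing ι) (hsv : StablyVisible ι) {η : Y}
    (hη : η ∉ range ι) (hf : ∀ n, IsGeodesicFrom (f n) (a n) (b n))
    (ha : Tendsto (ι ∘ a) atTop (𝓝 η)) (ht : ∀ n, t n ∈ Icc 0 (dist (a n) (b n)))
    (hbdd : IsBounded (range fun n => f n (t n))) (hl : Tendsto t atTop atTop)
    (h𝒰 : 𝒰 ≤ atTop) (hγ : ∀ s, Tendsto (fun n => f n (t n + s)) 𝒰 (𝓝 (γ s))) :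
    Tendsto (ι ∘ γ) atBot (𝓝 η) := by
  rw [← tendsto_comp_neg_atTop_iff]
  refine tendsto_atTop_of_stablyVisible hι hsv hη (fun n => (hf n).reverse) ha
    (t := fun n => dist (a n) (b n) - t n) (fun n => ?_) ?_ ?_ h𝒰 (γ := fun s => γ (-s))
    fun s => ?_
  · rw [dist_comm]
    exact ⟨sub_nonneg.2 (ht n).2, sub_le_self _ (ht n).1⟩
  · simpa only [sub_sub_cancel] using hbdd
  · simpa only [dist_comm, sub_sub_cancel] using hl
  · convert hγ (-s) using 3
    ring

end LimitLine

/-- **Non-emptiness of pencils.**  Let `X` be a proper geodesic metric space with a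
stably visible compactification `ι : X → Y`.  Then any two distinct boundary points
`ξ ≠ η` are joined by a geodesic line: there is an isometric embedding `γ : ℝ → X`
with `γ(t) → ξ` as `t → ∞` and `γ(t) → η` as `t → −∞`. -/
theorem stmt_5 {X Y : Type*} [MetricSpace X] [ProperSpace X] (hgeo : GeodesicSpace X)
    [TopologicalSpace Y] [T2Space Y] [SecondCountableTopology Y] [CompactSpace Y]
    (ι : X → Y) (hemb : IsOpenEmbedding ι) (hdense : DenseRange ι)
    (hsv : StablyVisible ι)
    (ξ η : Y) (hξ : ξ ∉ Set.range ι) (hη : η ∉ Set.range ι) (hne : ξ ≠ η) :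
    ∃ γ : ℝ → X, Isometry γ ∧
      Tendsto (fun t => ι (γ t)) atTop (𝓝 ξ) ∧
      Tendsto (fun t => ι (γ t)) atBot (𝓝 η) := by
  obtain ⟨a, ha⟩ := hdense.exists_seq_tendsto η
  obtain ⟨b, hb⟩ := hdense.exists_seq_tendsto ξ
  choose f hf using fun n => hgeo (a n) (b n)
  obtain ⟨B, hB, hmeet⟩ := hsv ξ η hξ hη hne a b f hf ha hb
  choose t ht htB using hmeet
  have hbdd : IsBounded (range fun n => f n (t n)) := hB.subset (range_subset_iff.2 htB)
  have hl : Tendsto t atTop atTop :=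
    ((tendsto_cobounded_iff_tendsto_dist_of_isBounded hbdd).1
      (tendsto_cobounded_of_tendsto_notMem_range hemb.continuous hη ha)).congr
      fun n => (hf n).dist_left (ht n)
  have hr : Tendsto (fun n => dist (a n) (b n) - t n) atTop atTop :=
    ((tendsto_cobounded_iff_tendsto_dist_of_isBounded hbdd).1
      (tendsto_cobounded_of_tendsto_notMem_range hemb.continuous hξ hb)).congr
      fun n => by rw [dist_comm, (hf n).dist_right (ht n)]
  obtain ⟨γ, hiso, hγ⟩ := exists_isometry_tendsto_of_isGeodesicFrom (.of atTop)
    (Ultrafilter.of_le _) hf ht hbdd hl hr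
  exact ⟨γ, hiso,
    tendsto_atTop_of_stablyVisible hemb.isInducing hsv hξ hf hb ht hbdd hr (Ultrafilter.of_le _) hγ,
    tendsto_atBot_of_stablyVisible hemb.isInducing hsv hη hf ha ht hbdd hl (Ultrafilter.of_le _) hγ⟩
end

section
/- Let X be a proper, geodesic metric space with a stably visible compactification X̄. If ξ₀, ξ₁, ξ₂ are three distinct points of ∂X, then there exist neighbourhoods U₀, U₁, U₂ of ξ₀, ξ₁, ξ₂ respectively in X̄ such that every geodesic segment in X joining a point of U₁ ∩ X to a point of U₂ ∩ X is disjoint from U₀. -/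
open Filter Topology

/-- **Separation of geodesics from a third boundary point.**  Let `X` be a proper
geodesic metric space with a stably visible compactification `ι : X → Y`.  If
`ξ₀, ξ₁, ξ₂` are three distinct boundary points, then there exist neighbourhoods
`U₀, U₁, U₂` of them in `Y` such that every geodesic segment joining a point of
`U₁ ∩ X` to a point of `U₂ ∩ X` is disjoint from `U₀`. -/
theorem stmt_6 {X Y : Type*} [MetricSpace X] [ProperSpace X] (hgeo : GeodesicSpace X)
    [TopologicalSpace Y] [T2Space Y] [SecondCountableTopology Y] [CompactSpace Y]
    (ι : X → Y) (hemb : IsOpenEmbedding ι) (hdense : DenseRange ι)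
    (hsv : StablyVisible ι)
    (ξ₀ ξ₁ ξ₂ : Y) (h₀ : ξ₀ ∉ Set.range ι) (h₁ : ξ₁ ∉ Set.range ι) (h₂ : ξ₂ ∉ Set.range ι)
    (h01 : ξ₀ ≠ ξ₁) (h02 : ξ₀ ≠ ξ₂) (h12 : ξ₁ ≠ ξ₂) :
    ∃ U₀ ∈ 𝓝 ξ₀, ∃ U₁ ∈ 𝓝 ξ₁, ∃ U₂ ∈ 𝓝 ξ₂,
      ∀ (u v : X) (f : ℝ → X), IsGeodesicFrom f u v → ι u ∈ U₁ → ι v ∈ U₂ →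
        ∀ t ∈ Set.Icc (0 : ℝ) (dist u v), ι (f t) ∉ U₀ := by
  by_contra hcon
  push_neg at hcon
  obtain ⟨s₀, hb₀⟩ := (𝓝 ξ₀).exists_antitone_basis
  obtain ⟨s₁, hb₁⟩ := (𝓝 ξ₁).exists_antitone_basis
  obtain ⟨s₂, hb₂⟩ := (𝓝 ξ₂).exists_antitone_basis
  choose u v f hf hu hv t ht hft using fun n =>
    hcon (s₀ n) (hb₀.1.mem_of_mem trivial) (s₁ n) (hb₁.1.mem_of_mem trivial)
      (s₂ n) (hb₂.1.mem_of_mem trivial)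
  set w : ℕ → X := fun n => f n (t n) with hw
  have hιu : Tendsto (fun n => ι (u n)) atTop (𝓝 ξ₁) := hb₁.tendsto hu
  have hιv : Tendsto (fun n => ι (v n)) atTop (𝓝 ξ₂) := hb₂.tendsto hv
  have hιw : Tendsto (fun n => ι (w n)) atTop (𝓝 ξ₀) := hb₀.tendsto hft
  have h0mem : ∀ n, (0 : ℝ) ∈ Set.Icc (0 : ℝ) (dist (u n) (v n)) :=
    fun n => ⟨le_refl 0, dist_nonneg⟩
  have hdmem : ∀ n, dist (u n) (v n) ∈ Set.Icc (0 : ℝ) (dist (u n) (v n)) :=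
    fun n => ⟨dist_nonneg, le_refl _⟩
  have hduw : ∀ n, dist (u n) (w n) = t n := by
    intro n
    have := (hf n).2.2 0 (h0mem n) (t n) (ht n)
    rw [(hf n).1] at this
    rw [hw]
    rw [this, zero_sub, abs_neg, abs_of_nonneg (ht n).1]
  have hdwv : ∀ n, dist (w n) (v n) = dist (u n) (v n) - t n := by
    intro n
    have := (hf n).2.2 (t n) (ht n) (dist (u n) (v n)) (hdmem n)
    rw [(hf n).2.1] at this
    rw [hw, this, abs_of_nonpos (by linarith [(ht n).2]), neg_sub]
  have hg1 : ∀ n, IsGeodesicFrom (f n) (u n) (w n) := by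
    intro n
    refine ⟨(hf n).1, by rw [hduw n], ?_⟩
    intro a ha b hb
    rw [hduw n] at ha hb
    exact (hf n).2.2 a ⟨ha.1, ha.2.trans (ht n).2⟩ b ⟨hb.1, hb.2.trans (ht n).2⟩
  have hg2 : ∀ n, IsGeodesicFrom (fun s => f n (t n + s)) (w n) (v n) := by
    intro n
    refine ⟨by simp [hw], ?_, ?_⟩
    · rw [hdwv n]
      show f n (t n + (dist (u n) (v n) - t n)) = v n
      rw [show t n + (dist (u n) (v n) - t n) = dist (u n) (v n) by ring, (hf n).2.1]
    · intro a ha b hb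
      rw [hdwv n] at ha hb
      have := (hf n).2.2 (t n + a) ⟨by linarith [(ht n).1, ha.1], by linarith [ha.2]⟩
        (t n + b) ⟨by linarith [(ht n).1, hb.1], by linarith [hb.2]⟩
      show dist (f n (t n + a)) (f n (t n + b)) = |a - b|
      rw [this]
      congr 1
      ring
  obtain ⟨B₁, hB₁, hq₁⟩ := hsv ξ₀ ξ₁ h₀ h₁ h01 u w f hg1 hιu hιw
  obtain ⟨B₂, hB₂, hq₂⟩ := hsv ξ₂ ξ₀ h₂ h₀ h02.symm w v _ hg2 hιw hιv
  choose r hr hrB using hq₁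
  choose s hs hsB using hq₂
  set x₀ : X := u 0 with hx₀
  obtain ⟨C₁, hC₁⟩ := hB₁.subset_closedBall x₀
  obtain ⟨C₂, hC₂⟩ := hB₂.subset_closedBall x₀
  -- escape to infinity
  have hesc : ∀ᶠ n in atTop, 2 * C₁ + C₂ + 1 < dist x₀ (w n) := by
    set R := 2 * C₁ + C₂ + 1 with hR
    have hK : IsCompact (ι '' Metric.closedBall x₀ R) :=
      (isCompact_closedBall x₀ R).image hemb.continuous
    have hmem : (ι '' Metric.closedBall x₀ R)ᶜ ∈ 𝓝 ξ₀ := by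
      refine hK.isClosed.isOpen_compl.mem_nhds ?_
      intro hξ
      obtain ⟨x, _, hx⟩ := hξ
      exact h₀ ⟨x, hx⟩
    filter_upwards [hιw hmem] with n hn
    by_contra hle
    push_neg at hle
    exact hn (Set.mem_image_of_mem ι (Metric.mem_closedBall'.mpr hle))
  obtain ⟨n, hn⟩ := hesc.exists
  -- derive contradiction at index n
  have hr' : r n ∈ Set.Icc (0 : ℝ) (t n) := by
    have := hr n
    rwa [hduw n] at this
  have hs' : s n ∈ Set.Icc (0 : ℝ) (dist (u n) (v n) - t n) := by
    have := hs n
    rwa [hdwv n] at this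
  have hq₁' : dist x₀ (f n (r n)) ≤ C₁ := by
    have := hC₁ (hrB n)
    rwa [Metric.mem_closedBall, dist_comm] at this
  have hq₂' : dist x₀ (f n (t n + s n)) ≤ C₂ := by
    have := hC₂ (hsB n)
    rwa [Metric.mem_closedBall, dist_comm] at this
  -- distance along the geodesic
  have hrmem : r n ∈ Set.Icc (0 : ℝ) (dist (u n) (v n)) :=
    ⟨hr'.1, hr'.2.trans (ht n).2⟩
  have htsmem : t n + s n ∈ Set.Icc (0 : ℝ) (dist (u n) (v n)) :=
    ⟨by linarith [(ht n).1, hs'.1], by linarith [hs'.2]⟩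
  have hd1 : dist (f n (r n)) (f n (t n + s n)) = t n + s n - r n := by
    rw [(hf n).2.2 (r n) hrmem (t n + s n) htsmem,
      abs_of_nonpos (by linarith [hr'.2, hs'.1]), neg_sub]
  have hd2 : dist (f n (r n)) (w n) = t n - r n := by
    rw [hw, (hf n).2.2 (r n) hrmem (t n) (ht n),
      abs_of_nonpos (by linarith [hr'.2]), neg_sub]
  have htri : dist x₀ (w n) ≤ dist x₀ (f n (r n)) + dist (f n (r n)) (w n) :=
    dist_triangle _ _ _
  have hbig : dist (f n (r n)) (f n (t n + s n)) ≤ C₁ + C₂ :=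
    (dist_triangle_left _ _ x₀).trans (add_le_add hq₁' hq₂')
  rw [hd1] at hbig
  rw [hd2] at htri
  linarith [hs'.1]
end

section
/- Let X be a proper, geodesic metric space with a stably visible compactification X̄. Then for each x ∈ X the function D : ∂X × ∂X → ℝ ∪ {∞} defined by D(ξ, η) := sup_{γ ∈ P(ξ,η)} d(x, γ) (with D(ξ, η) = ∞ when P(ξ, η) = ∅) is measurable with respect to the Borel σ-algebra of ∂X × ∂X. -/
open Filter Topology
open scoped ENNReal Classical

/-- The pencil `P(ξ, η)`: the set of geodesic lines `γ : ℝ → X` with `γ(t) → ξ` as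
`t → ∞` and `γ(t) → η` as `t → −∞` (limits taken in the compactification `Y`). -/
def pencil {X Y : Type*} [MetricSpace X] [TopologicalSpace Y] (ι : X → Y) (ξ η : Y) :
    Set (ℝ → X) :=
  {γ | Isometry γ ∧ Tendsto (fun t => ι (γ t)) atTop (𝓝 ξ) ∧
    Tendsto (fun t => ι (γ t)) atBot (𝓝 η)}

/-- `D(ξ, η) := sup_{γ ∈ P(ξ,η)} d(x, γ)`, with the convention `D(ξ, η) = ∞` when
`P(ξ, η) = ∅`. -/
noncomputable def pencilSup {X Y : Type*} [MetricSpace X] (x : X)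
    (Pen : Y → Y → Set (ℝ → X)) (ξ η : Y) : ℝ≥0∞ :=
  if Pen ξ η = ∅ then ⊤ else ⨆ γ ∈ Pen ξ η, EMetric.infEdist x (Set.range γ)

/-!
Write `S(q, m) ⊆ Y × Y` for the pairs of ends of lines `γ` with `d(γ 0, x) ≤ m` and
`d(x, γ) ≥ q`. The set `{D > c}` is the complement of `⋃ₘ S(0, m)` together with the sets
`S(r, m)` for rational `r > c`, so it suffices that each `S(q, m)` is closed. Such lines form a
compact set for pointwise convergence (Tychonoff, `X` proper), so lines `γₙ ∈ P(ξₙ, ηₙ)` have a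
cluster line `γ`. Stable visibility shows that each end of a geodesic line converges to a boundary
point, and that the ends of `γ` are `lim ξₙ` and `lim ηₙ`: otherwise long pieces of the `γₙ`
would join neighbourhoods of two distinct boundary points while staying far from `x`.
-/

open Set Metric

theorem MapClusterPt.exists_seq_tendsto_of_ge {Y α : Type*} [TopologicalSpace Y]
    [FirstCountableTopology Y] [SemilatticeSup α] [Nonempty α] {u : α → Y} {ζ : Y}
    (h : MapClusterPt ζ atTop u) (e : ℕ → α) :
    ∃ s : ℕ → α, (∀ k, e k ≤ s k) ∧ Tendsto (u ∘ s) atTop (𝓝 ζ) := by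
  obtain ⟨V, hV⟩ := (𝓝 ζ).exists_antitone_basis
  have : ∀ k, ∃ i ≥ e k, u i ∈ V k := fun k =>
    frequently_atTop.1 (mapClusterPt_iff_frequently.1 h _ (hV.mem k)) (e k)
  choose s hs hsV using this
  exact ⟨s, hs, hV.tendsto hsV⟩

section Lines

variable {X : Type*} [MetricSpace X] {γ : ℝ → X}

theorem Isometry.isGeodesicFrom (hγ : Isometry γ) {s t : ℝ} (hst : s ≤ t) :
    IsGeodesicFrom (fun r => γ (s + r)) (γ s) (γ t) := by
  have hd : ∀ a b : ℝ, dist (γ a) (γ b) = |a - b| := fun a b => by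
    rw [hγ.dist_eq, Real.dist_eq]
  have hD : dist (γ s) (γ t) = t - s := by
    rw [hd, abs_of_nonpos (by linarith), neg_sub]
  refine ⟨by simp, by simp [hD], fun a _ b _ => ?_⟩
  rw [hd]
  congr 1
  ring

theorem Isometry.abs_sub_le_dist (hγ : Isometry γ) (x : X) (t : ℝ) :
    |t| - dist (γ 0) x ≤ dist (γ t) x := by
  have := dist_triangle_right (γ t) (γ 0) x
  rw [hγ.dist_eq, Real.dist_eq, sub_zero] at this
  linarith

theorem isCompact_setOf_isometry_dist_le {α : Type*} [PseudoMetricSpace α] [ProperSpace X]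
    (a₀ : α) (x : X) (m : ℝ) : IsCompact {f : α → X | Isometry f ∧ dist (f a₀) x ≤ m} := by
  refine (isCompact_univ_pi fun a =>
    isCompact_closedBall x (dist a a₀ + m)).of_isClosed_subset ?_ ?_
  · simp_rw [ofPred_and, isometry_iff_dist_eq, ofPred_forall]
    exact (isClosed_iInter fun a => isClosed_iInter fun b =>
      isClosed_eq ((continuous_apply a).dist (continuous_apply b)) continuous_const).inter
      (isClosed_le ((continuous_apply a₀).dist continuous_const) continuous_const)
  · rintro f ⟨hf, hf₀⟩ a -
    rw [mem_closedBall]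
    linarith [dist_triangle (f a) (f a₀) x, hf.dist_eq a a₀]

theorem isClosed_setOf_le_infEDist_range {α : Type*} (x : X) (q : ℝ≥0∞) :
    IsClosed {f : α → X | q ≤ infEDist x (range f)} := by
  simp_rw [le_infEDist, forall_mem_range, ofPred_forall]
  exact isClosed_iInter fun a =>
    isClosed_le continuous_const (continuous_const.edist (continuous_apply a))

end Lines

section Pencil

variable {X Y : Type*} [MetricSpace X] [TopologicalSpace Y] {ι : X → Y}

theorem pencil_comp_neg {ξ η : Y} {γ : ℝ → X} (h : γ ∈ pencil ι ξ η) :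
    (fun t => γ (-t)) ∈ pencil ι η ξ :=
  ⟨h.1.comp (IsometryEquiv.neg ℝ).isometry, h.2.2.comp tendsto_neg_atTop_atBot,
    h.2.1.comp tendsto_neg_atBot_atTop⟩

theorem Isometry.notMem_range_of_mapClusterPt (hι : IsInducing ι) {γ : ℝ → X}
    (hγ : Isometry γ) {ξ : Y} (h : MapClusterPt ξ atTop fun t => ι (γ t)) : ξ ∉ range ι := by
  rintro ⟨z, rfl⟩
  have hz : MapClusterPt z atTop γ := hι.mapClusterPt_iff.1 h
  obtain ⟨t, hzt, ht⟩ := ((mapClusterPt_iff_frequently.1 hz _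
    (ball_mem_nhds z one_pos)).and_eventually (eventually_ge_atTop (1 + dist (γ 0) z))).exists
  linarith [hγ.abs_sub_le_dist z t, le_abs_self t, mem_ball.1 hzt]

/-- The pieces of the lines `γ k` on `[s k, t k]` lie outside the ball of radius `k - m`
about `x`. -/
theorem StablyVisible.eq_of_tendsto (hsv : StablyVisible ι) {ξ ξ' : Y} (hξ : ξ ∉ range ι)
    (hξ' : ξ' ∉ range ι) {γ : ℕ → ℝ → X} (hγ : ∀ k, Isometry (γ k)) {x : X} {m : ℝ}
    (hm : ∀ k, dist (γ k 0) x ≤ m) {s t : ℕ → ℝ} (hs : ∀ k : ℕ, (k : ℝ) ≤ s k)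
    (hst : ∀ k, s k ≤ t k) (ha : Tendsto (fun k => ι (γ k (s k))) atTop (𝓝 ξ))
    (hb : Tendsto (fun k => ι (γ k (t k))) atTop (𝓝 ξ')) : ξ = ξ' := by
  by_contra hne
  obtain ⟨B, hB, hmeet⟩ := hsv ξ' ξ hξ' hξ (Ne.symm hne) _ _ _
    (fun k => (hγ k).isGeodesicFrom (hst k)) ha hb
  obtain ⟨R, hR⟩ := hB.subset_closedBall x
  obtain ⟨k, hk⟩ := exists_nat_gt (R + m)
  obtain ⟨r, hr, hrB⟩ := hmeet k
  have hfar := (hγ k).abs_sub_le_dist x (s k + r)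
  linarith [mem_closedBall.1 (hR hrB), le_abs_self (s k + r), hm k, hs k, hr.1]

variable [CompactSpace Y] [FirstCountableTopology Y]

theorem StablyVisible.exists_tendsto_atTop (hsv : StablyVisible ι) (hι : IsInducing ι)
    {γ : ℝ → X} (hγ : Isometry γ) :
    ∃ ξ ∉ range ι, Tendsto (fun t => ι (γ t)) atTop (𝓝 ξ) := by
  obtain ⟨ξ, hξ⟩ := exists_clusterPt_of_compactSpace (map (fun t => ι (γ t)) atTop)
  refine ⟨ξ, hγ.notMem_range_of_mapClusterPt hι hξ,
    isCompact_univ.tendsto_nhds_of_unique_mapClusterPt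
      (Eventually.of_forall fun _ => mem_univ _) fun ζ _ hζ => ?_⟩
  obtain ⟨s, hs, hsζ⟩ := hζ.exists_seq_tendsto_of_ge fun k => (k : ℝ)
  obtain ⟨t, hst, htξ⟩ := MapClusterPt.exists_seq_tendsto_of_ge hξ s
  exact hsv.eq_of_tendsto (hγ.notMem_range_of_mapClusterPt hι hζ)
    (hγ.notMem_range_of_mapClusterPt hι hξ) (fun _ => hγ) (x := γ 0) (m := 0)
    (fun _ => (dist_self _).le) hs hst hsζ htξ

/-- If `γ` ended at `ξ' ≠ ξ`, the lines `γs j` close to `γ` far out would contain long pieces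
from near `ξ'` to near `ξ`. -/
theorem StablyVisible.tendsto_of_mapClusterPt (hsv : StablyVisible ι)
    (hι : IsOpenEmbedding ι)
    {ξs : ℕ → Y} {ξ : Y} (hξs : Tendsto ξs atTop (𝓝 ξ)) {γs : ℕ → ℝ → X}
    (hγs : ∀ j, Isometry (γs j)) (hbdd : Bornology.IsBounded (range fun j => γs j 0))
    (hlim : ∀ j, Tendsto (fun t => ι (γs j t)) atTop (𝓝 (ξs j))) {γ : ℝ → X}
    (hγ : Isometry γ) (hcl : MapClusterPt γ atTop γs) :
    Tendsto (fun t => ι (γ t)) atTop (𝓝 ξ) := by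
  have hξ : ξ ∉ range ι := hι.isOpen_range.isClosed_compl.mem_of_tendsto hξs
    (Eventually.of_forall fun j =>
      (hγs j).notMem_range_of_mapClusterPt hι.isInducing (hlim j).mapClusterPt)
  obtain ⟨ξ', hξ', hγξ'⟩ := hsv.exists_tendsto_atTop hι.isInducing hγ
  obtain ⟨m, hm⟩ := hbdd.subset_closedBall (γ 0)
  obtain ⟨V, hV⟩ := (𝓝 ξ).exists_antitone_basis
  obtain ⟨V', hV'⟩ := (𝓝 ξ').exists_antitone_basis
  have hpiece : ∀ k : ℕ, ∃ j s t,
      (k : ℝ) ≤ s ∧ s ≤ t ∧ ι (γs j s) ∈ V' k ∧ ι (γs j t) ∈ V k := by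
    intro k
    obtain ⟨s, hks, hs⟩ := ((eventually_ge_atTop (k : ℝ)).and
      (hγξ'.eventually (interior_mem_nhds.2 (hV'.mem k)))).exists
    have hnhd : {f : ℝ → X | ι (f s) ∈ interior (V' k)} ∈ 𝓝 γ :=
      (isOpen_interior.preimage (hι.continuous.comp (continuous_apply s))).mem_nhds hs
    obtain ⟨j, hjs, hjξ⟩ := ((mapClusterPt_iff_frequently.1 hcl _ hnhd).and_eventually
      (hξs.eventually (interior_mem_nhds.2 (hV.mem k)))).exists
    obtain ⟨t, hst, ht⟩ := ((eventually_ge_atTop s).and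
      (hlim j (isOpen_interior.mem_nhds hjξ))).exists
    exact ⟨j, s, t, hks, hst, interior_subset hjs, interior_subset ht⟩
  choose j s t hks hst hs ht using hpiece
  rwa [hsv.eq_of_tendsto hξ' hξ (fun k => hγs (j k))
    (fun k => mem_closedBall.1 (hm ⟨j k, rfl⟩)) hks hst (hV'.tendsto hs) (hV.tendsto ht)] at hγξ'

theorem StablyVisible.mem_pencil_of_mapClusterPt (hsv : StablyVisible ι)
    (hι : IsOpenEmbedding ι) {ξs ηs : ℕ → Y} {ξ η : Y} (hξs : Tendsto ξs atTop (𝓝 ξ))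
    (hηs : Tendsto ηs atTop (𝓝 η)) {γs : ℕ → ℝ → X}
    (hγs : ∀ j, γs j ∈ pencil ι (ξs j) (ηs j))
    (hbdd : Bornology.IsBounded (range fun j => γs j 0)) {γ : ℝ → X} (hγ : Isometry γ)
    (hcl : MapClusterPt γ atTop γs) : γ ∈ pencil ι ξ η := by
  have hrev := hsv.tendsto_of_mapClusterPt hι hηs (fun j => (pencil_comp_neg (hγs j)).1)
    (by simpa using hbdd) (fun j => (pencil_comp_neg (hγs j)).2.1)
    (hγ.comp (IsometryEquiv.neg ℝ).isometry)
    (hcl.tendsto_comp (((continuous_pi fun t => continuous_apply (-t)).tendsto γ)))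
  refine ⟨hγ, hsv.tendsto_of_mapClusterPt hι hξs (fun j => (hγs j).1) hbdd
    (fun j => (hγs j).2.1) hγ hcl, ?_⟩
  simpa [Function.comp_def] using hrev.comp tendsto_neg_atBot_atTop

theorem StablyVisible.isClosed_setOf_exists_mem_pencil (hsv : StablyVisible ι)
    (hι : IsOpenEmbedding ι) {C : Set (ℝ → X)} (hC : IsCompact C)
    (hCiso : ∀ f ∈ C, Isometry f) :
    IsClosed {p : Y × Y | ∃ γ ∈ C, γ ∈ pencil ι p.1 p.2} := by
  refine IsSeqClosed.isClosed fun u P hu hP => ?_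
  choose γs hγsC hγsP using hu
  obtain ⟨γ, hγC, hcl⟩ := hC.exists_clusterPt (f := map γs atTop)
    (le_principal_iff.2 (mem_map.2 (Eventually.of_forall hγsC)))
  have hbdd : Bornology.IsBounded (range fun j => γs j 0) :=
    (hC.image (continuous_apply 0)).isBounded.subset
      (range_subset_iff.2 fun j => mem_image_of_mem _ (hγsC j))
  exact ⟨γ, hγC, hsv.mem_pencil_of_mapClusterPt hι ((continuous_fst.tendsto P).comp hP)
    ((continuous_snd.tendsto P).comp hP) hγsP hbdd (hCiso γ hγC) hcl⟩

end Pencil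

theorem measurable_pencilSup {X Y α : Type*} [MetricSpace X] [MeasurableSpace α] (x : X)
    (Pen : Y → Y → Set (ℝ → X)) {ξ η : α → Y}
    (h : ∀ q : ℝ≥0∞, MeasurableSet {a | ∃ γ ∈ Pen (ξ a) (η a), q ≤ infEDist x (range γ)}) :
    Measurable fun a => pencilSup x Pen (ξ a) (η a) := by
  have hempty : {a | Pen (ξ a) (η a) = ∅} =
      {a | ∃ γ ∈ Pen (ξ a) (η a), 0 ≤ infEDist x (range γ)}ᶜ := by
    ext a
    simp [eq_empty_iff_forall_notMem]
  refine Measurable.ite (hempty ▸ (h 0).compl) measurable_const (measurable_of_Ioi fun c => ?_)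
  have hsup : (fun a => ⨆ γ ∈ Pen (ξ a) (η a), infEDist x (range γ)) ⁻¹' Ioi c =
      ⋃ (r : ℚ) (_ : c < (r : ℝ).toNNReal),
        {a | ∃ γ ∈ Pen (ξ a) (η a), ((r : ℝ).toNNReal : ℝ≥0∞) ≤ infEDist x (range γ)} := by
    ext a
    simp only [mem_preimage, mem_Ioi, lt_biSup_iff, mem_iUnion, mem_ofPred_eq, exists_prop]
    constructor
    · rintro ⟨γ, hγ, hc⟩
      obtain ⟨r, -, hcr, hr⟩ := ENNReal.lt_iff_exists_rat_btwn.1 hc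
      exact ⟨r, hcr, γ, hγ, hr.le⟩
    · rintro ⟨r, hcr, γ, hγ, hr⟩
      exact ⟨γ, hγ, hcr.trans_le hr⟩
  -- `pencilSup` is written with the alias `EMetric.infEdist`, which `rw` does not see through.
  exact (congrArg MeasurableSet hsup).mpr (.iUnion fun r => .iUnion fun _ => h _)

theorem StablyVisible.measurableSet_setOf_exists_mem_pencil {X Y : Type*} [MetricSpace X]
    [ProperSpace X] [TopologicalSpace Y] [SecondCountableTopology Y] [CompactSpace Y]
    [MeasurableSpace Y] [BorelSpace Y] {ι : X → Y} (hsv : StablyVisible ι)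
    (hι : IsOpenEmbedding ι) (x : X) (q : ℝ≥0∞) :
    MeasurableSet {p : Y × Y | ∃ γ ∈ pencil ι p.1 p.2, q ≤ infEDist x (range γ)} := by
  have hunion : {p : Y × Y | ∃ γ ∈ pencil ι p.1 p.2, q ≤ infEDist x (range γ)} =
      ⋃ m : ℕ, {p : Y × Y | ∃ γ ∈ {f : ℝ → X | Isometry f ∧ dist (f 0) x ≤ m} ∩
        {f | q ≤ infEDist x (range f)}, γ ∈ pencil ι p.1 p.2} := by
    ext p
    simp only [mem_ofPred_eq, mem_iUnion, mem_inter_iff]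
    constructor
    · rintro ⟨γ, hγ, hq⟩
      exact ⟨⌈dist (γ 0) x⌉₊, γ, ⟨⟨hγ.1, Nat.le_ceil _⟩, hq⟩, hγ⟩
    · rintro ⟨m, γ, ⟨-, hq⟩, hγ⟩
      exact ⟨γ, hγ, hq⟩
  rw [hunion]
  exact MeasurableSet.iUnion fun m => (hsv.isClosed_setOf_exists_mem_pencil hι
    ((isCompact_setOf_isometry_dist_le 0 x m).inter_right (isClosed_setOf_le_infEDist_range x q))
    fun f hf => hf.1.1).measurableSet

theorem stmt_7_general {X Y : Type*} [MetricSpace X] [ProperSpace X]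
    [TopologicalSpace Y] [SecondCountableTopology Y] [CompactSpace Y]
    [MeasurableSpace Y] [BorelSpace Y]
    (ι : X → Y) (hemb : IsOpenEmbedding ι)
    (hsv : StablyVisible ι) (x : X) :
    Measurable (fun p : {y : Y // y ∉ Set.range ι} × {y : Y // y ∉ Set.range ι} =>
      pencilSup x (pencil ι) p.1.1 p.2.1) :=
  measurable_pencilSup x (pencil ι) fun q =>
    (measurable_subtype_coe.comp measurable_fst).prodMk
      (measurable_subtype_coe.comp measurable_snd)
      (hsv.measurableSet_setOf_exists_mem_pencil hemb x q)

/-- **Measurability of the pencil distance function.**  Let `X` be a proper geodesic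
metric space with a stably visible compactification `ι : X → Y`.  Then for each `x ∈ X`
the function `D : ∂X × ∂X → ℝ ∪ {∞}`, `D(ξ,η) = sup_{γ ∈ P(ξ,η)} d(x, γ)` (equal to `∞`
when `P(ξ,η) = ∅`), is Borel measurable. -/
theorem stmt_7 {X Y : Type*} [MetricSpace X] [ProperSpace X] (hgeo : GeodesicSpace X)
    [TopologicalSpace Y] [T2Space Y] [SecondCountableTopology Y] [CompactSpace Y]
    [MeasurableSpace Y] [BorelSpace Y]
    (ι : X → Y) (hemb : IsOpenEmbedding ι) (hdense : DenseRange ι)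
    (hsv : StablyVisible ι) (x : X) :
    Measurable (fun p : {y : Y // y ∉ Set.range ι} × {y : Y // y ∉ Set.range ι} =>
      pencilSup x (pencil ι) p.1.1 p.2.1) :=
  stmt_7_general ι hemb hsv x
end

section
/- The end compactification (Freudenthal–Hopf compactification) of the Cayley graph of a finitely generated group is stably visible. -/
open Filter Topology

/-- The Cayley graph of a group `G` with respect to a generating set `S`. -/
def cayleyGraph {G : Type*} [Group G] (S : Set G) : SimpleGraph G where
  Adj a b := a ≠ b ∧ (a⁻¹ * b ∈ S ∨ b⁻¹ * a ∈ S)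
  symm := by
    constructor
    rintro a b ⟨h1, h2⟩
    exact ⟨h1.symm, h2.symm⟩
  loopless := ⟨fun a h => h.1 rfl⟩

/-- A sequence of vertices converges to the end `ξ` in the end (Freudenthal--Hopf)
compactification: for every finite `K`, the sequence eventually lies in the component
of the complement of `K` determined by `ξ`. -/
def TendstoEnd {V : Type*} (Gr : SimpleGraph V) (u : ℕ → V) (ξ : Gr.end) : Prop :=
  ∀ K : Finset V, ∀ᶠ n in atTop,
    ∃ h : u n ∉ (K : Set V), Gr.componentComplMk h = ξ.val (Opposite.op K)

/-!
Two distinct ends `ξ ≠ η` are already separated by a single finite set `K`: they choose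
different components of the complement of `K`. Eventually `xₙ` and `yₙ` lie in these two
components, so every path from `yₙ` to `xₙ` has to pass through `K`. The finitely many
earlier paths are caught by their endpoints `xₙ`, so `K ∪ {xₙ | n < N}` is a finite, hence
bounded, set meeting every path.
-/

namespace SimpleGraph

variable {V : Type*} {Gr : SimpleGraph V}

theorem Walk.componentComplMk_eq_of_support_notMem {K : Set V} {a b : V} (w : Gr.Walk a b)
    (hw : ∀ v ∈ w.support, v ∉ K) (ha : a ∉ K) (hb : b ∉ K) :
    Gr.componentComplMk ha = Gr.componentComplMk hb := by
  induction w with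
  | nil => rfl
  | @cons u v c hadj w ih =>
    have hv : v ∉ K := hw v (by simp)
    exact (Gr.componentComplMk_eq_of_adj ha hv hadj).trans
      (ih (fun z hz => hw z (List.mem_cons_of_mem u hz)) hv hb)

theorem Walk.exists_mem_support_of_componentComplMk_ne {K : Set V} {a b : V}
    (w : Gr.Walk a b) (ha : a ∉ K) (hb : b ∉ K)
    (hne : Gr.componentComplMk ha ≠ Gr.componentComplMk hb) :
    ∃ v ∈ w.support, v ∈ K := by
  by_contra! hw
  exact hne (w.componentComplMk_eq_of_support_notMem hw ha hb)

theorem exists_finset_eventually_walk_meets_of_tendstoEnd {ξ η : Gr.end} (hne : ξ ≠ η)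
    {x y : ℕ → V} (hx : TendstoEnd Gr x ξ) (hy : TendstoEnd Gr y η) :
    ∃ K : Finset V, ∀ᶠ n in atTop, ∀ w : Gr.Walk (y n) (x n), ∃ v ∈ w.support, v ∈ K := by
  obtain ⟨K, hK⟩ := Function.ne_iff.mp (Subtype.coe_ne_coe.mpr hne)
  refine ⟨K.unop, ?_⟩
  filter_upwards [hx K.unop, hy K.unop] with n ⟨hxn, hxξ⟩ ⟨hyn, hyη⟩ w
  refine w.exists_mem_support_of_componentComplMk_ne hyn hxn ?_
  rw [hxξ, hyη]
  exact fun h => hK h.symm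

theorem exists_dist_le_of_finite (u : V) {B : Set V} (hB : B.Finite) :
    ∃ R : ℕ, ∀ v ∈ B, Gr.dist u v ≤ R :=
  ⟨hB.toFinset.sup (Gr.dist u), fun _ hv => Finset.le_sup (hB.mem_toFinset.mpr hv)⟩

end SimpleGraph

theorem stmt_12_general {G : Type*} [Group G] (S : Set G)
    (ξ η : (cayleyGraph S).end) (hne : ξ ≠ η)
    (x y : ℕ → G)
    (hx : TendstoEnd (cayleyGraph S) x ξ) (hy : TendstoEnd (cayleyGraph S) y η)
    (p : ∀ n : ℕ, (cayleyGraph S).Walk (y n) (x n)) :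
    ∃ B : Set G, (∃ R : ℕ, ∀ g ∈ B, (cayleyGraph S).dist 1 g ≤ R) ∧
      ∀ n : ℕ, ∃ v ∈ (p n).support, v ∈ B := by
  obtain ⟨K, hK⟩ := SimpleGraph.exists_finset_eventually_walk_meets_of_tendstoEnd hne hx hy
  obtain ⟨N, hN⟩ := eventually_atTop.mp hK
  have hB : ((K : Set G) ∪ x '' Set.Iio N).Finite :=
    K.finite_toSet.union ((Set.finite_Iio N).image x)
  refine ⟨_, SimpleGraph.exists_dist_le_of_finite 1 hB, fun n => ?_⟩
  rcases lt_or_ge n N with hn | hn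
  · exact ⟨x n, (p n).end_mem_support, Or.inr (Set.mem_image_of_mem x hn)⟩
  · obtain ⟨v, hv, hvK⟩ := hN n hn (p n)
    exact ⟨v, hv, Or.inl hvK⟩

/-- **Stable visibility of the end compactification.**
Let `G` be a finitely generated group with Cayley graph `Γ(G, S)`.  If the sequences
`(xₙ)` and `(yₙ)` converge in the end compactification to two distinct ends `ξ ≠ η`,
then there is a bounded subset of the Cayley graph intersecting every geodesic segment
joining `yₙ` to `xₙ`. -/
theorem stmt_12 {G : Type*} [Group G] (S : Set G) (hSfin : S.Finite)
    (hSgen : Subgroup.closure S = ⊤)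
    (ξ η : (cayleyGraph S).end) (hne : ξ ≠ η)
    (x y : ℕ → G)
    (hx : TendstoEnd (cayleyGraph S) x ξ) (hy : TendstoEnd (cayleyGraph S) y η)
    (p : ∀ n : ℕ, (cayleyGraph S).Walk (y n) (x n))
    (hp : ∀ n : ℕ, (p n).length = (cayleyGraph S).dist (y n) (x n)) :
    ∃ B : Set G, (∃ R : ℕ, ∀ g ∈ B, (cayleyGraph S).dist 1 g ≤ R) ∧
      ∀ n : ℕ, ∃ v ∈ (p n).support, v ∈ B :=
  stmt_12_general S ξ η hne x y hx hy p
end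

section
/- Let G = ℤ_m ≀ F_k be a lamplighter group over a tree (m ≥ 2, k ≥ 2) with Cayley graph X as described, let x, y be two vertices of the tree 𝕋, let u = (x, f) and v = (y, g) be two vertices of X, and let γ be a geodesic in X joining u to v. Then the projection of γ to 𝕋 contains every edge of the tree-geodesic [x, y] exactly once. -/
open Filter Topology
open scoped Classical

/-- The Cayley graph of the free group `F_k` with respect to the free generators:
a homogeneous tree of degree `2k`. -/
def treeGraph (k : ℕ) : SimpleGraph (FreeGroup (Fin k)) where
  Adj a b := a ≠ b ∧ ∃ i : Fin k, a⁻¹ * b = FreeGroup.of i ∨ b⁻¹ * a = FreeGroup.of i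
  symm := by
    constructor
    rintro a b ⟨h1, i, h2⟩
    exact ⟨h1.symm, i, h2.symm⟩
  loopless := ⟨fun a h => h.1 rfl⟩

/-- The Cayley graph of the lamplighter group `ℤ_m ≀ F_k` with respect to the standard
generators: vertices are pairs (position in the tree, finitely supported configuration
of lamps), and edges either move the lamplighter along a tree edge or switch the lamp
at the current position by `±1`. -/
def lampGraph (m k : ℕ) :
    SimpleGraph (FreeGroup (Fin k) × (FreeGroup (Fin k) →₀ ZMod m)) where
  Adj u v :=
    (u.2 = v.2 ∧ (treeGraph k).Adj u.1 v.1) ∨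
    (u.1 = v.1 ∧ u.2 ≠ v.2 ∧ (∀ z, z ≠ u.1 → u.2 z = v.2 z) ∧
      (v.2 u.1 = u.2 u.1 + 1 ∨ u.2 u.1 = v.2 u.1 + 1))
  symm := by
    constructor
    rintro u v (⟨h1, h2⟩ | ⟨h1, h2, h3, h4⟩)
    · exact Or.inl ⟨h1.symm, (treeGraph k).adj_symm h2⟩
    · refine Or.inr ⟨h1.symm, h2.symm, fun z hz => (h3 z (by rw [h1]; exact hz)).symm, ?_⟩
      rw [← h1]
      exact h4.symm
  loopless := by
    constructor
    rintro u (⟨h1, h2⟩ | ⟨h1, h2, h3, h4⟩)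
    · exact h2.1 rfl
    · exact h2 rfl

/-!
Deleting an edge `e` of the tree geodesic `[x, y]` separates `x` from `y`. Record a walk of the
lamplighter by its list of moves. The moves made on the `x`-side of `e` and those made on the
`y`-side switch disjoint sets of lamps, so they may be reordered: first all moves on the `x`-side,
which then form a route from `x` to the endpoint of `e` on that side, then one crossing of `e`,
then all moves on the `y`-side. This produces a walk with the same endpoints that is shorter by
(number of crossings of `e`) - 1, so a geodesic crosses `e` at most once; it crosses `e` at least
once because it gets from `x` to `y`.
-/

namespace FreeGroup

variable {α : Type*} [DecidableEq α]

/-- Left multiplication by a letter only acts on the front of a reduced word. -/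
theorem getLast?_toWord_mk_singleton_mul (σ : α × Bool) (u : FreeGroup α) :
    (mk [σ] * u).toWord.getLast? = u.toWord.getLast? ∨ u = 1 ∨ mk [σ] * u = 1 := by
  have hword : (mk [σ] * u).toWord = reduce (σ :: u.toWord) := by
    rw [toWord_mul, toWord_mk, reduce_singleton]; rfl
  rw [← toWord_eq_nil_iff (x := u), ← toWord_eq_nil_iff (x := mk [σ] * u), hword, reduce.cons,
    reduce_toWord]
  rcases u.toWord with _ | ⟨c, _ | ⟨c', tl⟩⟩
  · simp
  · dsimp only
    split_ifs <;> simp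
  · dsimp only
    split_ifs <;> simp [List.getLast?_cons_cons]

end FreeGroup

theorem Finsupp.add_single_sub_eq_of_forall_ne {V A : Type*} [AddCommGroup A] {f g : V →₀ A}
    {a : V} (h : ∀ t, t ≠ a → f t = g t) : f + Finsupp.single a (g a - f a) = g := by
  ext t
  by_cases ht : t = a
  · subst ht; simp
  · simp [Finsupp.single_eq_of_ne' (Ne.symm ht), h t ht]

namespace SimpleGraph

variable {V : Type*}

section Separation

variable {G : SimpleGraph V}

theorem IsAcyclic.not_reachable_deleteEdges {x y : V} {e : Sym2 V} (hG : G.IsAcyclic)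
    {q : G.Walk x y} (hq : q.IsPath) (he : e ∈ q.edges) :
    ¬(G.deleteEdges {e}).Reachable x y := by
  rintro ⟨r⟩
  let r' := r.mapLe (G.deleteEdges_le {e})
  have hqr : q = r'.bypass :=
    congrArg Subtype.val ((hG.subsingleton_path x y).elim ⟨q, hq⟩ ⟨_, r'.bypass_isPath⟩)
  have he' : e ∈ r.edges := by
    rw [← r.edges_mapLe_eq_edges (G.deleteEdges_le {e})]
    exact r'.edges_bypass_subset_edges (hqr ▸ he)
  simpa using r.edges_subset_edgeSet he'

theorem reachable_deleteEdges_iff_of_adj {x c d : V} {e : Sym2 V} (h : G.Adj c d)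
    (he : s(c, d) ≠ e) :
    (G.deleteEdges {e}).Reachable x c ↔ (G.deleteEdges {e}).Reachable x d := by
  have hcd : (G.deleteEdges {e}).Reachable c d := (deleteEdges_adj.mpr ⟨h, he⟩).reachable
  exact ⟨fun h => h.trans hcd, fun h => h.trans hcd.symm⟩

theorem exists_adj_of_not_reachable_deleteEdges {x y : V} {e : Sym2 V}
    (hxy : ¬(G.deleteEdges {e}).Reachable x y) (h : G.Reachable x y) :
    ∃ a b, G.Adj a b ∧ s(a, b) = e ∧
      (G.deleteEdges {e}).Reachable x a ∧ ¬(G.deleteEdges {e}).Reachable x b := by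
  obtain ⟨r⟩ := h
  obtain ⟨d, -, ha, hb⟩ :=
    r.exists_boundary_dart {t | (G.deleteEdges {e}).Reachable x t} (.refl x) hxy
  refine ⟨d.fst, d.snd, d.adj, ?_, ha, hb⟩
  by_contra hne
  exact hb ((reachable_deleteEdges_iff_of_adj d.adj hne).mp ha)

theorem ne_iff_of_adj_reachable_deleteEdges {x a b c d : V}
    (ha : (G.deleteEdges {s(a, b)}).Reachable x a) (hb : ¬(G.deleteEdges {s(a, b)}).Reachable x b)
    (hcd : G.Adj c d) :
    ¬((G.deleteEdges {s(a, b)}).Reachable x c ↔ (G.deleteEdges {s(a, b)}).Reachable x d) ↔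
      s(c, d) = s(a, b) := by
  refine ⟨fun hne => ?_, fun he => ?_⟩
  · by_contra he
    exact hne (reachable_deleteEdges_iff_of_adj hcd he)
  · rcases Sym2.eq_iff.mp he with ⟨rfl, rfl⟩ | ⟨rfl, rfl⟩ <;> simp [ha, hb]

/-- Every edge of `G` between the two sides `φ ⁻¹' {s}` leaves side `s` through `g s`. -/
def IsGated (G : SimpleGraph V) (φ : V → Bool) (g : Bool → V) : Prop :=
  ∀ a b, G.Adj a b → φ a ≠ φ b → a = g (φ a)

end Separation

/-- `lampGraph m k` is `(treeGraph k).lamplighterGraph (ZMod m)` by definition. -/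
def lamplighterGraph (H : SimpleGraph V) (A : Type*) [AddCommGroupWithOne A] :
    SimpleGraph (V × (V →₀ A)) where
  Adj u v :=
    (u.2 = v.2 ∧ H.Adj u.1 v.1) ∨
    (u.1 = v.1 ∧ u.2 ≠ v.2 ∧ (∀ z, z ≠ u.1 → u.2 z = v.2 z) ∧
      (v.2 u.1 = u.2 u.1 + 1 ∨ u.2 u.1 = v.2 u.1 + 1))
  symm := ⟨by
    rintro u v (⟨h1, h2⟩ | ⟨h1, h2, h3, h4⟩)
    · exact Or.inl ⟨h1.symm, h2.symm⟩
    · exact Or.inr ⟨h1.symm, h2.symm, fun z hz => (h3 z (h1 ▸ hz)).symm, h1 ▸ h4.symm⟩⟩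
  loopless := ⟨by rintro u (⟨-, h⟩ | ⟨-, h, -⟩) <;> simp_all⟩

variable {A : Type*} {H : SimpleGraph V}

theorem lamplighterGraph.reachable_fst [AddCommGroupWithOne A] {u v : V × (V →₀ A)}
    (h : (H.lamplighterGraph A).Reachable u v) : H.Reachable u.1 v.1 := by
  obtain ⟨p⟩ := h
  induction p with
  | nil => rfl
  | cons h _ ih =>
    rcases h with ⟨-, hadj⟩ | ⟨hpos, -⟩
    · exact hadj.reachable.trans ih
    · exact hpos ▸ ih

namespace Lamplighter

/-! A list `L : List (V ⊕ A)` encodes the moves of the lamplighter: `.inl t` walks to the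
neighbour `t`, `.inr ε` adds `ε` to the lamp at the current position. -/

section Sides

variable (φ : V → Bool)

def crossings : V → List (V ⊕ A) → ℕ
  | _, [] => 0
  | a, .inl t :: L => (if φ a = φ t then 0 else 1) + crossings t L
  | a, .inr _ :: L => crossings a L

def sideMoves (s : Bool) : V → List (V ⊕ A) → List (V ⊕ A)
  | _, [] => []
  | a, .inl t :: L => if φ a = s ∧ φ t = s then .inl t :: sideMoves s t L else sideMoves s t L
  | a, .inr ε :: L => if φ a = s then .inr ε :: sideMoves s a L else sideMoves s a L

/-- Seen from side `s`, the lamplighter waits at the gate `g s` while it is on the other side. -/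
def toSide (g : Bool → V) (s : Bool) (a : V) : V := if φ a = s then a else g s

theorem length_sideMoves_add (a : V) (L : List (V ⊕ A)) :
    (sideMoves φ false a L).length + (sideMoves φ true a L).length + crossings φ a L =
      L.length := by
  induction L generalizing a with
  | nil => rfl
  | cons mv L ih =>
    cases mv with
    | inl t =>
      have := ih t
      simp only [sideMoves, crossings, List.length_cons]
      cases φ a <;> cases φ t <;> simp <;> omega
    | inr ε =>
      have := ih a
      simp only [sideMoves, crossings, List.length_cons]
      cases φ a <;> simp <;> omega

variable {φ} {g : Bool → V} {s : Bool}

theorem toSide_of_eq {a : V} (h : φ a = s) : toSide φ g s a = a := if_pos h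

theorem toSide_of_ne {a : V} (h : φ a ≠ s) : toSide φ g s a = g s := if_neg h

theorem toSide_eq_of_adj (hgate : H.IsGated φ g) {a t : V} (hat : H.Adj a t)
    (hs : ¬(φ a = s ∧ φ t = s)) : toSide φ g s a = toSide φ g s t := by
  by_cases ha : φ a = s
  · have ht : φ t ≠ s := fun ht => hs ⟨ha, ht⟩
    rw [toSide_of_eq ha, toSide_of_ne ht, ← ha]
    exact hgate a t hat (ha ▸ ht.symm)
  · by_cases ht : φ t = s
    · rw [toSide_of_ne ha, toSide_of_eq ht, ← ht]
      exact (hgate t a hat.symm (ht ▸ Ne.symm ha)).symm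
    · rw [toSide_of_ne ha, toSide_of_ne ht]

end Sides

variable (H) [AddCommGroupWithOne A]

def IsRoute : V → V → List (V ⊕ A) → Prop
  | a, b, [] => a = b
  | a, b, .inl t :: L => H.Adj a t ∧ IsRoute t b L
  | a, b, .inr ε :: L => (ε = 1 ∨ ε = -1) ∧ IsRoute a b L

variable {H}

noncomputable def effect : V → List (V ⊕ A) → V →₀ A
  | _, [] => 0
  | _, .inl t :: L => effect t L
  | a, .inr ε :: L => Finsupp.single a ε + effect a L

theorem IsRoute.append {a b c : V} {P Q : List (V ⊕ A)} (hP : IsRoute H a b P)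
    (hQ : IsRoute H b c Q) : IsRoute H a c (P ++ Q) := by
  induction P generalizing a with
  | nil => rwa [show a = b from hP]
  | cons mv P ih => cases mv <;> exact ⟨hP.1, ih hP.2⟩

theorem effect_append {a b : V} {P : List (V ⊕ A)} (hP : IsRoute H a b P) (Q : List (V ⊕ A)) :
    effect a (P ++ Q) = effect a P + effect b Q := by
  induction P generalizing a with
  | nil => simp [effect, show a = b from hP]
  | cons mv P ih =>
    cases mv with
    | inl t => exact ih hP.2
    | inr ε => simp only [List.cons_append, effect, ih hP.2, add_assoc]

theorem IsRoute.crossings_pos {φ : V → Bool} {a b : V} {L : List (V ⊕ A)} (h : IsRoute H a b L)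
    (hab : φ a ≠ φ b) : 0 < crossings φ a L := by
  induction L generalizing a with
  | nil => exact absurd (congrArg φ h) hab
  | cons mv L ih =>
    cases mv with
    | inl t =>
      simp only [crossings]
      by_cases hat : φ a = φ t
      · have := ih h.2 (hat ▸ hab); omega
      · simp [hat]
    | inr ε => exact ih h.2 hab

section Gated

variable {φ : V → Bool} {g : Bool → V}

theorem IsRoute.sideMoves (hgate : H.IsGated φ g) {a b : V} {L : List (V ⊕ A)}
    (h : IsRoute H a b L) (s : Bool) :
    IsRoute H (toSide φ g s a) (toSide φ g s b) (sideMoves φ s a L) := by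
  induction L generalizing a with
  | nil => rw [show a = b from h]; rfl
  | cons mv L ih =>
    cases mv with
    | inl t =>
      simp only [Lamplighter.sideMoves]
      split_ifs with hs
      · have := ih h.2
        rw [toSide_of_eq hs.2] at this
        rw [toSide_of_eq hs.1]
        exact ⟨h.1, this⟩
      · rw [toSide_eq_of_adj hgate h.1 hs]; exact ih h.2
    | inr ε =>
      simp only [Lamplighter.sideMoves]
      split_ifs with hs
      · exact ⟨h.1, ih h.2⟩
      · exact ih h.2

theorem effect_sideMoves (hgate : H.IsGated φ g) {a b : V} {L : List (V ⊕ A)}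
    (h : IsRoute H a b L) (s : Bool) :
    effect (toSide φ g s a) (sideMoves φ s a L) = (effect a L).filter (φ · = s) := by
  induction L generalizing a with
  | nil => exact (Finsupp.filter_zero _).symm
  | cons mv L ih =>
    cases mv with
    | inl t =>
      simp only [Lamplighter.sideMoves, effect]
      split_ifs with hs
      · have := ih h.2
        rwa [toSide_of_eq hs.2] at this
      · rw [toSide_eq_of_adj hgate h.1 hs]; exact ih h.2
    | inr ε =>
      simp only [Lamplighter.sideMoves, effect, Finsupp.filter_add]
      split_ifs with hs
      · rw [Finsupp.filter_single_of_pos (p := (φ · = s)) hs, ← ih h.2, toSide_of_eq hs]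
        rfl
      · rw [Finsupp.filter_single_of_neg (p := (φ · = s)) hs, zero_add, ih h.2]

theorem IsRoute.exists_shortcut (hgate : H.IsGated φ g) (hg : H.Adj (g true) (g false))
    {a b : V} {L : List (V ⊕ A)} (hL : IsRoute H a b L) (ha : φ a = true) (hb : φ b = false) :
    ∃ R, IsRoute H a b R ∧ effect a R = effect a L ∧
      R.length + crossings φ a L = L.length + 1 := by
  have htrue := hL.sideMoves hgate true
  have hfalse := hL.sideMoves hgate false
  rw [toSide_of_eq ha, toSide_of_ne (by simp [hb])] at htrue
  rw [toSide_of_ne (by simp [ha]), toSide_of_eq hb] at hfalse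
  refine ⟨Lamplighter.sideMoves φ true a L ++
    .inl (g false) :: Lamplighter.sideMoves φ false a L, htrue.append ⟨hg, hfalse⟩, ?_, ?_⟩
  · have htrue_eff := effect_sideMoves hgate hL true
    have hfalse_eff := effect_sideMoves hgate hL false
    rw [toSide_of_eq ha] at htrue_eff
    rw [toSide_of_ne (by simp [ha])] at hfalse_eff
    rw [effect_append htrue, effect, htrue_eff, hfalse_eff]
    simpa using Finsupp.filter_add_filter_not (effect a L) (φ · = true)
  · have := length_sideMoves_add φ a L
    simp only [List.length_append, List.length_cons]
    omega

end Gated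

theorem exists_isRoute_of_walk (φ : V → Bool) {u v : V × (V →₀ A)}
    (p : (lamplighterGraph H A).Walk u v) :
    ∃ L, IsRoute H u.1 v.1 L ∧ u.2 + effect u.1 L = v.2 ∧ L.length = p.length ∧
      crossings φ u.1 L = p.darts.countP (fun d => φ d.fst.1 ≠ φ d.snd.1) := by
  induction p with
  | nil => exact ⟨[], rfl, by simp [effect], rfl, rfl⟩
  | @cons u u' v h p ih =>
    obtain ⟨L, hL, heff, hlen, hcross⟩ := ih
    rcases id h with ⟨hc, hadj⟩ | ⟨hpos, -, hoff, hpm⟩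
    · refine ⟨.inl u'.1 :: L, ⟨hadj, hL⟩, hc ▸ heff, by simp [hlen], ?_⟩
      rw [crossings, hcross, Walk.darts_cons, List.countP_cons, add_comm]
      by_cases hφ : φ u.1 = φ u'.1 <;> simp [hφ]
    · refine ⟨.inr (u'.2 u.1 - u.2 u.1) :: L, ⟨?_, hpos ▸ hL⟩, ?_, by simp [hlen], ?_⟩
      · rcases hpm with h1 | h1 <;> rw [h1] <;> simp
      · rw [effect, ← add_assoc, Finsupp.add_single_sub_eq_of_forall_ne hoff, hpos]
        exact heff
      · simp [crossings, hcross, hpos]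

/-- If `1 = 0` in `A`, a move `.inr 0` is not an edge; hence only `≤`. -/
theorem IsRoute.exists_walk {a b : V} {L : List (V ⊕ A)} (h : IsRoute H a b L) (c : V →₀ A) :
    ∃ p : (lamplighterGraph H A).Walk (a, c) (b, c + effect a L), p.length ≤ L.length := by
  induction L generalizing a c with
  | nil => subst h; exact ⟨Walk.nil.copy rfl (by simp [effect]), by simp⟩
  | cons mv L ih =>
    cases mv with
    | inl t =>
      obtain ⟨p, hp⟩ := ih h.2 c
      exact ⟨.cons (v := (t, c)) (Or.inl ⟨rfl, h.1⟩) p, Nat.succ_le_succ hp⟩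
    | inr ε =>
      obtain ⟨p, hp⟩ := ih h.2 (c + Finsupp.single a ε)
      have hend : (b, c + Finsupp.single a ε + effect a L) = (b, c + effect a (.inr ε :: L)) := by
        rw [effect, add_assoc]
      by_cases hε : ε = 0
      · subst hε
        exact ⟨p.copy (by simp) hend, by simp; omega⟩
      · have hadj : (lamplighterGraph H A).Adj (a, c) (a, c + Finsupp.single a ε) := by
          refine Or.inr ⟨rfl, by simpa using hε, fun t ht => ?_, ?_⟩
          · simp [Finsupp.single_eq_of_ne' (Ne.symm ht)]
          · rcases h.1 with rfl | rfl <;> simp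
        exact ⟨(Walk.cons hadj p).copy rfl hend,
          by rw [Walk.length_copy]; exact Nat.succ_le_succ hp⟩

theorem countP_darts_ne_eq_one {φ : V → Bool} {g : Bool → V} (hgate : H.IsGated φ g)
    (hg : H.Adj (g true) (g false)) {x y : V} {c c' : V →₀ A}
    (p : (lamplighterGraph H A).Walk (x, c) (y, c'))
    (hp : p.length = (lamplighterGraph H A).dist (x, c) (y, c')) (hx : φ x = true)
    (hy : φ y = false) :
    p.darts.countP (fun d => φ d.fst.1 ≠ φ d.snd.1) = 1 := by
  obtain ⟨L, hL, heff, hlen, hcross⟩ := exists_isRoute_of_walk φ p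
  dsimp only at hL heff hcross
  obtain ⟨R, hR, hReff, hRlen⟩ := hL.exists_shortcut hgate hg hx hy
  obtain ⟨p', hp'⟩ := hR.exists_walk c
  have hdist := dist_le (p'.copy rfl (by rw [hReff, heff]))
  rw [Walk.length_copy, ← hp, ← hlen] at hdist
  have hpos := hL.crossings_pos (φ := φ) (by simp [hx, hy])
  omega

end Lamplighter

theorem lamplighterGraph.countP_darts_eq_one [AddCommGroupWithOne A] {x y : V} {f g : V →₀ A}
    {e : Sym2 V} (hxy : ¬(H.deleteEdges {e}).Reachable x y)
    (p : (lamplighterGraph H A).Walk (x, f) (y, g))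
    (hp : p.length = (lamplighterGraph H A).dist (x, f) (y, g)) :
    p.darts.countP (fun d => s(d.fst.1, d.snd.1) = e) = 1 := by
  obtain ⟨a, b, hab, rfl, ha, hb⟩ :=
    exists_adj_of_not_reachable_deleteEdges hxy (lamplighterGraph.reachable_fst p.reachable)
  let φ : V → Bool := fun t => (H.deleteEdges {s(a, b)}).Reachable x t
  have hsides (c d : V) (hcd : H.Adj c d) : φ c ≠ φ d ↔ s(c, d) = s(a, b) := by
    simp only [φ, ne_eq, decide_eq_decide]
    exact ne_iff_of_adj_reachable_deleteEdges ha hb hcd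
  have hgate : H.IsGated φ (fun s => if s then a else b) := by
    intro c d hcd hne
    rcases Sym2.eq_iff.mp ((hsides c d hcd).mp hne) with ⟨rfl, -⟩ | ⟨rfl, -⟩ <;>
      simp [φ, ha, hb]
  rw [← Lamplighter.countP_darts_ne_eq_one hgate hab p hp (by simp [φ])
    (by simpa [φ] using hxy)]
  refine List.countP_congr fun d _ => ?_
  rcases d.adj with ⟨-, hd⟩ | ⟨hd, -⟩
  · simpa using (hsides _ _ hd).symm
  · have hdiag : s(d.snd.1, d.snd.1) ≠ s(a, b) := fun h =>
      hab.ne (Sym2.mk_isDiag_iff.mp (h ▸ Sym2.mk_isDiag_iff.mpr rfl))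
    simp [hd, hdiag]

end SimpleGraph

namespace treeGraph

open FreeGroup

variable {k : ℕ}

theorem exists_eq_mk_of_adj {a b : FreeGroup (Fin k)} (h : (treeGraph k).Adj a b) :
    ∃ τ, a⁻¹ * b = mk [τ] := by
  obtain ⟨-, i, hi | hi⟩ := h
  · exact ⟨(i, true), hi⟩
  · exact ⟨(i, false), by rw [← inv_inv (a⁻¹ * b), mul_inv_rev, inv_inv, hi]; rfl⟩

theorem eq_or_eq_of_getLast?_ne {a b z : FreeGroup (Fin k)} (h : (treeGraph k).Adj a b)
    (hne : (a⁻¹ * z).toWord.getLast? ≠ (b⁻¹ * z).toWord.getLast?) : a = z ∨ b = z := by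
  obtain ⟨τ, hτ⟩ := exists_eq_mk_of_adj h
  have hb : b⁻¹ * z = mk [(τ.1, !τ.2)] * (a⁻¹ * z) := by
    rw [show b⁻¹ * z = (a⁻¹ * b)⁻¹ * (a⁻¹ * z) by group, hτ, inv_mk]
    rfl
  rcases getLast?_toWord_mk_singleton_mul (τ.1, !τ.2) (a⁻¹ * z) with h | h | h
  · exact absurd (hb ▸ h).symm hne
  · exact .inl (inv_mul_eq_one.mp h)
  · exact .inr (inv_mul_eq_one.mp (hb.trans h))

theorem eq_of_getLast?_eq {b w z : FreeGroup (Fin k)} (hb : (treeGraph k).Adj b z)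
    (hw : (treeGraph k).Adj w z)
    (h : (b⁻¹ * z).toWord.getLast? = (w⁻¹ * z).toWord.getLast?) : b = w := by
  obtain ⟨σ, hσ⟩ := exists_eq_mk_of_adj hb
  obtain ⟨σ', hσ'⟩ := exists_eq_mk_of_adj hw
  rw [hσ, hσ', toWord_mk, toWord_mk, reduce_singleton, reduce_singleton] at h
  simp only [List.getLast?_singleton, Option.some.injEq] at h
  exact inv_injective (mul_right_cancel (hσ.trans (h ▸ hσ'.symm)))

theorem isBridge {z w : FreeGroup (Fin k)} (h : (treeGraph k).Adj z w) :
    (treeGraph k).IsBridge s(z, w) := by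
  rw [SimpleGraph.isBridge_iff_forall_walk_mem_edges]
  intro p
  -- `t` lies on the side of `w` iff the words of `t⁻¹ z` and `w⁻¹ z` end in the same letter
  have hz : (z⁻¹ * z).toWord.getLast? ≠ (w⁻¹ * z).toWord.getLast? := by
    obtain ⟨σ, hσ⟩ := exists_eq_mk_of_adj h.symm
    simp [hσ]
  obtain ⟨d, hd, hfst, hsnd⟩ := p.exists_boundary_dart
    {t | (t⁻¹ * z).toWord.getLast? ≠ (w⁻¹ * z).toWord.getLast?} hz (by simp)
  replace hsnd : (d.snd⁻¹ * z).toWord.getLast? = (w⁻¹ * z).toWord.getLast? := not_not.mp hsnd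
  rcases eq_or_eq_of_getLast?_ne d.adj (hsnd ▸ hfst) with hz' | hz'
  · have hw := eq_of_getLast?_eq (hz' ▸ d.adj.symm) h.symm hsnd
    have hedge : d.edge = s(z, w) := by rw [← hz', ← hw]; rfl
    exact hedge ▸ List.mem_map_of_mem hd
  · exact absurd (hz' ▸ hsnd) hz

theorem isAcyclic : (treeGraph k).IsAcyclic :=
  SimpleGraph.isAcyclic_iff_forall_adj_isBridge.mpr fun _ _ => isBridge

end treeGraph

theorem stmt_13_general (m k : ℕ)
    (x y : FreeGroup (Fin k)) (f g : FreeGroup (Fin k) →₀ ZMod m)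
    (p : (lampGraph m k).Walk (x, f) (y, g))
    (hp : p.length = (lampGraph m k).dist (x, f) (y, g))
    (q : (treeGraph k).Walk x y) (hq : q.length = (treeGraph k).dist x y)
    (z w : FreeGroup (Fin k)) (hzw : ∃ d ∈ q.darts, d.toProd = (z, w)) :
    (p.darts.countP fun d' => decide
      ((d'.toProd.1.1 = z ∧ d'.toProd.2.1 = w) ∨
       (d'.toProd.1.1 = w ∧ d'.toProd.2.1 = z))) = 1 := by
  obtain ⟨d, hd, hdzw⟩ := hzw
  have hedge : s(z, w) ∈ q.edges := by
    have : d.edge = s(z, w) := by rw [SimpleGraph.Dart.edge, hdzw]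
    exact this ▸ List.mem_map_of_mem hd
  have hsep := treeGraph.isAcyclic.not_reachable_deleteEdges (q.isPath_of_length_eq_dist hq) hedge
  rw [← SimpleGraph.lamplighterGraph.countP_darts_eq_one (A := ZMod m) hsep p hp]
  exact List.countP_congr fun d _ => by simp

/-- **Tree edges of a geodesic in the lamplighter group are crossed exactly once.**
Let `X` be the Cayley graph of `ℤ_m ≀ F_k` (`m ≥ 2`, `k ≥ 2`), let `u = (x, f)` and
`v = (y, g)` be vertices of `X`, and let `p` be a geodesic in `X` joining `u` to `v`.
Then the projection of `p` to the tree traverses every edge of the tree geodesic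
`[x, y]` exactly once. -/
theorem stmt_13 (m k : ℕ) (hm : 2 ≤ m) (hk : 2 ≤ k)
    (x y : FreeGroup (Fin k)) (f g : FreeGroup (Fin k) →₀ ZMod m)
    (p : (lampGraph m k).Walk (x, f) (y, g))
    (hp : p.length = (lampGraph m k).dist (x, f) (y, g))
    (q : (treeGraph k).Walk x y) (hq : q.length = (treeGraph k).dist x y)
    (z w : FreeGroup (Fin k)) (hzw : ∃ d ∈ q.darts, d.toProd = (z, w)) :
    (p.darts.countP fun d' => decide
      ((d'.toProd.1.1 = z ∧ d'.toProd.2.1 = w) ∨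
       (d'.toProd.1.1 = w ∧ d'.toProd.2.1 = z))) = 1 :=
  stmt_13_general m k x y f g p hp q hq z w hzw
end
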